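/- arXiv:1412.5043 — 10 statements merged into one kernel-verified Lean document; each statement's English description precedes it below -/
import Mathlib

section
/- Let C ≥ 1 and let I be a C-reduced fractional ideal of a number field F of degree n with r₂ complex infinite places. Then the inverse ideal I⁻¹ is an integral ideal (i.e. I⁻¹ ⊆ O_F) and its norm satisfies N(I⁻¹) ≤ Cⁿ · (2/π)^{r₂} · √|Δ_F|. -/
open NumberField
open scoped nonZeroDivisors

noncomputable section

/-- `‖g‖_u` : the length of `g ∈ F` with respect to the metric `u`, namely
`‖g‖_u² = Σ_{σ real} u_σ²·|σ(g)|² + 2·Σ_{σ complex} u_σ²·|σ(g)|²`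
(the multiplicity `mult v` is `1` at real places and `2` at complex places). -/
def unorm (F : Type*) [Field F] [NumberField F]
    (u : InfinitePlace F → ℝ) (g : F) : ℝ :=
  Real.sqrt (∑ v : InfinitePlace F, (v.mult : ℝ) * (u v) ^ 2 * (v g) ^ 2)

/-- `1` is primitive in the fractional ideal `I` : `1 ∈ I` and no `1/d ∈ I` for an integer
`d ≥ 2`. -/
def primitiveOne (F : Type*) [Field F] [NumberField F]
    (I : FractionalIdeal (𝓞 F)⁰ F) : Prop :=
  (1 : F) ∈ I ∧ ∀ d : ℤ, 2 ≤ d → (1 : F) / (d : F) ∉ I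

/-- `I` is `C`-reduced : `1` is primitive in `I` and there is a metric `u` (positive at every
infinite place) such that `‖1‖_u ≤ C·‖g‖_u` for all nonzero `g ∈ I`. -/
def isCReduced (F : Type*) [Field F] [NumberField F] (C : ℝ)
    (I : FractionalIdeal (𝓞 F)⁰ F) : Prop :=
  primitiveOne F I ∧
    ∃ u : InfinitePlace F → ℝ, (∀ v, 0 < u v) ∧
      ∀ g : F, g ∈ I → g ≠ 0 → unorm F u 1 ≤ C * unorm F u g


open NumberField.InfinitePlace NumberField.mixedEmbedding MeasureTheory Module in
theorem aux_key (F : Type*) [Field F] [NumberField F] (C : ℝ) (hC : 1 ≤ C)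
    (I : FractionalIdeal (𝓞 F)⁰ F) (hI0 : I ≠ 0)
    (hpt : ∀ g : F, g ∈ I → g ≠ 0 → ∃ v : InfinitePlace F, 1 / C ≤ v g) :
    (1 : ℝ) ≤ (FractionalIdeal.absNorm I : ℝ) * C ^ (finrank ℚ F) *
      (2 / Real.pi) ^ (nrComplexPlaces F) * Real.sqrt |(discr F : ℝ)| := by
  classical
  have hC0 : (0 : ℝ) < C := lt_of_lt_of_le one_pos hC
  set Iu : (FractionalIdeal (𝓞 F)⁰ F)ˣ := Units.mk0 I hI0 with hIu
  set f : InfinitePlace F → NNReal := fun _ => ⟨1 / C, by positivity⟩ with hf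
  have hvol : volume (convexBodyLT F f) ≤ minkowskiBound F Iu := by
    refine le_of_not_gt fun h => ?_
    obtain ⟨a, haI, ha0, hlt⟩ := exists_ne_zero_mem_ideal_lt F Iu h
    obtain ⟨v, hv⟩ := hpt a haI ha0
    exact absurd (hlt v) (not_lt.mpr hv)
  rw [convexBodyLT_volume, minkowskiBound, volume_fundamentalDomain_fractionalIdealLatticeBasis,
    volume_fundamentalDomain_latticeBasis, mixedEmbedding.finrank] at hvol
  have hvolR := ENNReal.toReal_mono (ENNReal.mul_ne_top (ENNReal.mul_ne_top ENNReal.ofReal_ne_top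
    (ENNReal.mul_ne_top (ENNReal.pow_ne_top (ENNReal.inv_ne_top.mpr two_ne_zero))
      ENNReal.coe_ne_top)) (ENNReal.pow_ne_top ENNReal.ofNat_ne_top)) hvol
  simp only [ENNReal.toReal_mul, ENNReal.toReal_pow, ENNReal.toReal_inv, ENNReal.toReal_ofNat,
    ENNReal.coe_toReal, ENNReal.toReal_ofReal (Rat.cast_nonneg.mpr (FractionalIdeal.absNorm_nonneg _))] at hvolR
  have hfactor : ((convexBodyLTFactor F : NNReal) : ℝ) = 2 ^ nrRealPlaces F *
      Real.pi ^ nrComplexPlaces F := by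
    simp [convexBodyLTFactor, NNReal.coe_real_pi]
  have hprod : ((∏ w : InfinitePlace F, f w ^ w.mult : NNReal) : ℝ) = (1 / C) ^ finrank ℚ F := by
    push_cast
    simp only [hf, NNReal.coe_mk]
    rw [Finset.prod_pow_eq_pow_sum, sum_mult_eq]
    rfl
  have hD : ((NNReal.sqrt ‖discr F‖₊ : NNReal) : ℝ) = Real.sqrt |(discr F : ℝ)| := by
    rw [Real.coe_sqrt, coe_nnnorm, Int.norm_eq_abs]
  rw [hfactor, hprod, hD, show ((Iu : FractionalIdeal (𝓞 F)⁰ F)) = I from rfl] at hvolR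
  have hN : (0:ℝ) < (FractionalIdeal.absNorm I : ℝ) := by
    refine Rat.cast_pos.mpr (lt_of_le_of_ne (FractionalIdeal.absNorm_nonneg I) (Ne.symm ?_))
    exact fun h => hI0 (FractionalIdeal.absNorm_eq_zero_iff.mp h)
  have hpi := Real.pi_pos
  have hn : finrank ℚ F = nrRealPlaces F + 2 * nrComplexPlaces F :=
    (card_add_two_mul_card_eq_rank F).symm
  have hDpos : (0:ℝ) ≤ Real.sqrt |(discr F : ℝ)| := Real.sqrt_nonneg _
  calc (1:ℝ) = (2 ^ nrRealPlaces F * Real.pi ^ nrComplexPlaces F * (1/C) ^ finrank ℚ F) *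
        (C ^ finrank ℚ F / (2 ^ nrRealPlaces F * Real.pi ^ nrComplexPlaces F)) := by
        rw [div_pow, one_pow]; field_simp
    _ ≤ ((FractionalIdeal.absNorm I : ℝ) * (2⁻¹ ^ nrComplexPlaces F *
          Real.sqrt |(discr F : ℝ)|) * 2 ^ finrank ℚ F) *
        (C ^ finrank ℚ F / (2 ^ nrRealPlaces F * Real.pi ^ nrComplexPlaces F)) :=
        mul_le_mul_of_nonneg_right hvolR (by positivity)
    _ = ((FractionalIdeal.absNorm I : ℝ) * C ^ finrank ℚ F * Real.sqrt |(discr F : ℝ)|) *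
        ((2:ℝ)⁻¹ ^ nrComplexPlaces F * 2 ^ finrank ℚ F /
          (2 ^ nrRealPlaces F * Real.pi ^ nrComplexPlaces F)) := by ring
    _ = (FractionalIdeal.absNorm I : ℝ) * C ^ finrank ℚ F * (2 / Real.pi) ^ nrComplexPlaces F *
        Real.sqrt |(discr F : ℝ)| := by
        rw [hn]
        rw [show ((2:ℝ)⁻¹ ^ nrComplexPlaces F *
            2 ^ (nrRealPlaces F + 2 * nrComplexPlaces F) /
            (2 ^ nrRealPlaces F * Real.pi ^ nrComplexPlaces F)) =
            (2 / Real.pi) ^ nrComplexPlaces F from by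
          rw [div_pow, inv_pow, pow_add, two_mul, pow_add]
          field_simp]
        ring

/-- If `C ≥ 1` and `I` is a `C`-reduced fractional ideal of a number field `F` of degree `n`
with `r₂` complex places, then `I⁻¹` is an integral ideal and
`N(I⁻¹) ≤ Cⁿ · (2/π)^{r₂} · √|Δ_F|`. -/
theorem stmt_0 (F : Type*) [Field F] [NumberField F] (C : ℝ) (hC : 1 ≤ C)
    (I : FractionalIdeal (𝓞 F)⁰ F) (hI : isCReduced F C I) :
    I⁻¹ ≤ 1 ∧
      (FractionalIdeal.absNorm I⁻¹ : ℝ) ≤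
        C ^ (Module.finrank ℚ F) * (2 / Real.pi) ^ (InfinitePlace.nrComplexPlaces F) *
          Real.sqrt |(NumberField.discr F : ℝ)| := by
  obtain ⟨⟨h1I, -⟩, u, hu, hbound⟩ := hI
  have hC0 : (0:ℝ) < C := lt_of_lt_of_le one_pos hC
  have hI0 : I ≠ 0 := by
    intro h
    rw [h] at h1I
    exact one_ne_zero ((FractionalIdeal.mem_zero_iff _).mp h1I)
  have hinv : I⁻¹ ≤ 1 := by
    intro x hx
    have hm := FractionalIdeal.mul_mem_mul hx h1I
    rw [mul_one, inv_mul_cancel₀ hI0] at hm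
    exact hm
  have hpt : ∀ g : F, g ∈ I → g ≠ 0 → ∃ v : InfinitePlace F, 1 / C ≤ v g := by
    intro g hg hg0
    by_contra hcon
    push_neg at hcon
    have hsum : (∑ v : InfinitePlace F, (v.mult:ℝ) * u v ^ 2 * (v g) ^ 2) <
        ∑ v : InfinitePlace F, (v.mult:ℝ) * u v ^ 2 * (1/C) ^ 2 := by
      refine Finset.sum_lt_sum_of_nonempty Finset.univ_nonempty fun v _ => ?_
      have hm : (0:ℝ) < (v.mult:ℝ) * u v ^ 2 := by
        have h1 := hu v
        have h2 : (0:ℝ) < (v.mult:ℝ) := Nat.cast_pos.mpr InfinitePlace.mult_pos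
        positivity
      exact mul_lt_mul_of_pos_left
        (pow_lt_pow_left₀ (hcon v) (apply_nonneg v g) two_ne_zero) hm
    have hlt : unorm F u g < unorm F u 1 / C := by
      have h1 : unorm F u 1 = Real.sqrt (∑ v : InfinitePlace F, (v.mult:ℝ) * u v ^ 2) := by
        unfold unorm
        congr 1
        exact Finset.sum_congr rfl fun v _ => by rw [map_one, one_pow, mul_one]
      have h2 : (∑ v : InfinitePlace F, (v.mult:ℝ) * u v ^ 2 * (1/C) ^ 2) =
          (1/C) ^ 2 * ∑ v : InfinitePlace F, (v.mult:ℝ) * u v ^ 2 := by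
        rw [Finset.mul_sum]
        exact Finset.sum_congr rfl fun v _ => by ring
      have h3 : Real.sqrt (∑ v : InfinitePlace F, (v.mult:ℝ) * u v ^ 2 * (1/C) ^ 2) =
          unorm F u 1 / C := by
        rw [h2, h1, Real.sqrt_mul (by positivity), Real.sqrt_sq (by positivity),
          one_div, inv_mul_eq_div]
      calc unorm F u g < Real.sqrt (∑ v : InfinitePlace F, (v.mult:ℝ) * u v ^ 2 * (1/C) ^ 2) :=
            Real.sqrt_lt_sqrt (Finset.sum_nonneg fun v _ => by positivity) hsum
        _ = unorm F u 1 / C := h3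
    have hb := hbound g hg hg0
    have := (lt_div_iff₀ hC0).mp hlt
    nlinarith
  have hkey := aux_key F C hC I hI0 hpt
  have hN : (0:ℝ) < (FractionalIdeal.absNorm I : ℝ) := by
    refine Rat.cast_pos.mpr (lt_of_le_of_ne (FractionalIdeal.absNorm_nonneg I) (Ne.symm ?_))
    exact fun h => hI0 (FractionalIdeal.absNorm_eq_zero_iff.mp h)
  refine ⟨hinv, ?_⟩
  have hinvNorm : (FractionalIdeal.absNorm I⁻¹ : ℝ) = (FractionalIdeal.absNorm I : ℝ)⁻¹ := by
    rw [map_inv₀, Rat.cast_inv]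
  rw [hinvNorm, inv_eq_one_div, div_le_iff₀ hN]
  calc (1:ℝ) ≤ (FractionalIdeal.absNorm I : ℝ) * C ^ (Module.finrank ℚ F) *
        (2 / Real.pi) ^ (InfinitePlace.nrComplexPlaces F) *
        Real.sqrt |(NumberField.discr F : ℝ)| := hkey
    _ = C ^ (Module.finrank ℚ F) * (2 / Real.pi) ^ (InfinitePlace.nrComplexPlaces F) *
        Real.sqrt |(NumberField.discr F : ℝ)| * (FractionalIdeal.absNorm I : ℝ) := by ring
end
end

section
/- Let C ≥ 1, let I be a fractional ideal of a number field F of degree n with r₂ complex infinite places, and let u be a metric satisfying the normalization ∏_{σ real} u_σ · ∏_{σ complex} u_σ² = 1 and such that ‖1‖_u ≤ C·‖g‖_u for every nonzero g ∈ I. Then ‖u‖ ≤ C · √n · (2/π)^{r₂/n} · (√|Δ_F| · N(I))^{1/n}. -/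
open NumberField
open scoped nonZeroDivisors

noncomputable section

open NumberField.InfinitePlace NumberField.mixedEmbedding MeasureTheory Module ENNReal NNReal Real

lemma key_minkowski (F : Type*) [Field F] [NumberField F]
    (I : FractionalIdeal (𝓞 F)⁰ F) (hI : I ≠ 0)
    (u : InfinitePlace F → ℝ) (hu : ∀ v, 0 < u v)
    (hnormal : ∏ v : InfinitePlace F, (u v) ^ (v.mult) = 1)
    (t : ℝ) (ht : 0 < t)
    (hX : (2 / Real.pi) ^ (nrComplexPlaces F) * (Real.sqrt |(NumberField.discr F : ℝ)| *
      (FractionalIdeal.absNorm I : ℝ)) < t ^ (finrank ℚ F)) :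
    ∃ a : F, a ∈ I ∧ a ≠ 0 ∧ unorm F u a < Real.sqrt (finrank ℚ F) * t := by
  classical
  set J : (FractionalIdeal (𝓞 F)⁰ F)ˣ := Units.mk0 I hI with hJ
  set f : InfinitePlace F → ℝ≥0 :=
    fun v => ⟨(u v)⁻¹ * t, le_of_lt (mul_pos (inv_pos.2 (hu v)) ht)⟩ with hf
  have hfv : ∀ v, (f v : ℝ) = (u v)⁻¹ * t := fun v => rfl
  have hprod : ∏ w : InfinitePlace F, ((f w : ℝ)) ^ (mult w) = t ^ (finrank ℚ F) := by
    show ∏ w : InfinitePlace F, ((u w)⁻¹ * t) ^ (mult w) = t ^ (finrank ℚ F)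
    calc ∏ w : InfinitePlace F, ((u w)⁻¹ * t) ^ (mult w)
        = (∏ w : InfinitePlace F, ((u w) ^ (mult w))⁻¹) *
            ∏ w : InfinitePlace F, t ^ (mult w) := by
          rw [← Finset.prod_mul_distrib]
          exact Finset.prod_congr rfl fun w _ => by rw [mul_pow, inv_pow]
      _ = t ^ (finrank ℚ F) := by
          rw [Finset.prod_inv_distrib, hnormal, inv_one, one_mul,
            Finset.prod_pow_eq_pow_sum, sum_mult_eq]
  have hvolne : volume (convexBodyLT F f) ≠ ⊤ := by
    rw [convexBodyLT_volume]
    exact ENNReal.mul_ne_top ENNReal.coe_ne_top ENNReal.coe_ne_top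
  have hvol : minkowskiBound F J < volume (convexBodyLT F f) := by
    rw [← ENNReal.toReal_lt_toReal (minkowskiBound_lt_top F J).ne hvolne]
    have h2 : (minkowskiBound F J).toReal =
        (FractionalIdeal.absNorm I : ℝ) * (2 : ℝ)⁻¹ ^ nrComplexPlaces F *
          Real.sqrt |(NumberField.discr F : ℝ)| * 2 ^ (finrank ℚ F) := by
      rw [minkowskiBound, volume_fundamentalDomain_fractionalIdealLatticeBasis,
        volume_fundamentalDomain_latticeBasis, mixedEmbedding.finrank]
      simp only [ENNReal.toReal_mul, ENNReal.toReal_pow, ENNReal.toReal_inv, toReal_ofNat,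
        ENNReal.coe_toReal, ENNReal.toReal_ofReal
          (Rat.cast_nonneg.mpr (FractionalIdeal.absNorm_nonneg _)),
        Real.coe_sqrt, coe_nnnorm, Int.norm_eq_abs]
      have : FractionalIdeal.absNorm (J : FractionalIdeal (𝓞 F)⁰ F) = FractionalIdeal.absNorm I :=
        rfl
      rw [this]; push_cast; ring
    have h3 : (volume (convexBodyLT F f)).toReal =
        (2 : ℝ) ^ nrRealPlaces F * Real.pi ^ nrComplexPlaces F * t ^ (finrank ℚ F) := by
      rw [convexBodyLT_volume, ENNReal.toReal_mul, ENNReal.coe_toReal, ENNReal.coe_toReal,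
        NNReal.coe_prod]
      simp_rw [NNReal.coe_pow]
      rw [hprod, convexBodyLTFactor]
      push_cast [NNReal.coe_real_pi]
      ring
    rw [h2, h3]
    have hn : (finrank ℚ F) = nrRealPlaces F + 2 * nrComplexPlaces F :=
      (card_add_two_mul_card_eq_rank F).symm
    have hpi : (0:ℝ) < Real.pi := Real.pi_pos
    rw [div_pow, div_mul_eq_mul_div, div_lt_iff₀ (by positivity)] at hX
    calc (FractionalIdeal.absNorm I : ℝ) * (2 : ℝ)⁻¹ ^ nrComplexPlaces F *
          Real.sqrt |(NumberField.discr F : ℝ)| * 2 ^ (finrank ℚ F)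
        = (2:ℝ) ^ nrRealPlaces F * ((2:ℝ) ^ nrComplexPlaces F *
            (Real.sqrt |(NumberField.discr F : ℝ)| * (FractionalIdeal.absNorm I : ℝ)))
           := by
          rw [hn, pow_add, two_mul, pow_add]; field_simp; rw [one_div, inv_pow]; field_simp
      _ < (2:ℝ) ^ nrRealPlaces F * (t ^ (finrank ℚ F) * Real.pi ^ nrComplexPlaces F) :=
          mul_lt_mul_of_pos_left hX (by positivity)
      _ = (2 : ℝ) ^ nrRealPlaces F * Real.pi ^ nrComplexPlaces F * t ^ (finrank ℚ F) := by
          ring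
  obtain ⟨a, haI, ha0, hav⟩ := exists_ne_zero_mem_ideal_lt F J hvol
  refine ⟨a, haI, ha0, ?_⟩
  have hlt : ∑ v : InfinitePlace F, (v.mult : ℝ) * (u v) ^ 2 * (v a) ^ 2 <
      (finrank ℚ F) * t ^ 2 := by
    rw [← sum_mult_eq (K := F)]
    push_cast
    rw [Finset.sum_mul]
    refine Finset.sum_lt_sum_of_nonempty Finset.univ_nonempty fun v _ => ?_
    have h1 : u v * v a < t := by
      have := hav v
      rw [hfv] at this
      calc u v * v a < u v * ((u v)⁻¹ * t) := by
            exact mul_lt_mul_of_pos_left this (hu v)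
        _ = t := by rw [← mul_assoc, mul_inv_cancel₀ (hu v).ne', one_mul]
    have h2 : (0:ℝ) ≤ u v * v a := mul_nonneg (hu v).le (apply_nonneg v a)
    have h3 : (u v * v a) ^ 2 < t ^ 2 := by nlinarith
    calc (v.mult : ℝ) * (u v) ^ 2 * (v a) ^ 2 = (v.mult : ℝ) * (u v * v a) ^ 2 := by ring
      _ < (v.mult : ℝ) * t ^ 2 := by
          exact mul_lt_mul_of_pos_left h3 (by exact_mod_cast mult_pos)
  have : unorm F u a < Real.sqrt ((finrank ℚ F) * t ^ 2) := by
    rw [unorm]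
    exact Real.sqrt_lt_sqrt (Finset.sum_nonneg fun v _ => by positivity) hlt
  calc unorm F u a < Real.sqrt ((finrank ℚ F) * t ^ 2) := this
    _ = Real.sqrt (finrank ℚ F) * t := by
        rw [Real.sqrt_mul (by positivity), Real.sqrt_sq ht.le]

/-- Let `C ≥ 1`, `I` a fractional ideal of a number field `F` of degree `n` with `r₂` complex
places, and `u` a metric with `∏_{σ real} u_σ · ∏_{σ complex} u_σ² = 1` such that
`‖1‖_u ≤ C·‖g‖_u` for every nonzero `g ∈ I`. Then
`‖u‖ ≤ C · √n · (2/π)^{r₂/n} · (√|Δ_F| · N(I))^{1/n}`. -/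
theorem stmt_1 (F : Type*) [Field F] [NumberField F] (C : ℝ) (hC : 1 ≤ C)
    (I : FractionalIdeal (𝓞 F)⁰ F) (hI : I ≠ 0)
    (u : InfinitePlace F → ℝ) (hu : ∀ v, 0 < u v)
    (hnormal : ∏ v : InfinitePlace F, (u v) ^ (v.mult) = 1)
    (hred : ∀ g : F, g ∈ I → g ≠ 0 → unorm F u 1 ≤ C * unorm F u g) :
    unorm F u 1 ≤
      C * Real.sqrt (Module.finrank ℚ F) *
        (2 / Real.pi) ^
          ((InfinitePlace.nrComplexPlaces F : ℝ) / (Module.finrank ℚ F : ℝ)) *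
        (Real.sqrt |(NumberField.discr F : ℝ)| * (FractionalIdeal.absNorm I : ℝ)) ^
          ((1 : ℝ) / (Module.finrank ℚ F : ℝ)) := by
  have hn : 0 < finrank ℚ F := finrank_pos
  have hpi : (0:ℝ) < Real.pi := Real.pi_pos
  have h2p : (0:ℝ) < 2 / Real.pi := by positivity
  have hΔ : (0:ℝ) < Real.sqrt |(NumberField.discr F : ℝ)| :=
    Real.sqrt_pos.2 (abs_pos.2 (by exact_mod_cast discr_ne_zero F))
  have hNI : (0:ℝ) < (FractionalIdeal.absNorm I : ℝ) := by
    have h0 : FractionalIdeal.absNorm I ≠ 0 := fun h =>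
      hI (FractionalIdeal.absNorm_eq_zero_iff.mp h)
    have h1 := FractionalIdeal.absNorm_nonneg I
    exact_mod_cast lt_of_le_of_ne h1 (Ne.symm h0)
  set X : ℝ := (2 / Real.pi) ^ (nrComplexPlaces F) *
    (Real.sqrt |(NumberField.discr F : ℝ)| * (FractionalIdeal.absNorm I : ℝ)) with hXdef
  have hXpos : 0 < X := by positivity
  have hRHS : X ^ ((1:ℝ) / (finrank ℚ F : ℝ)) =
      (2 / Real.pi) ^ ((nrComplexPlaces F : ℝ) / (finrank ℚ F : ℝ)) *
      (Real.sqrt |(NumberField.discr F : ℝ)| * (FractionalIdeal.absNorm I : ℝ)) ^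
        ((1 : ℝ) / (finrank ℚ F : ℝ)) := by
    rw [hXdef, Real.mul_rpow (by positivity) (by positivity), ← Real.rpow_natCast (2 / Real.pi)
      (nrComplexPlaces F), ← Real.rpow_mul h2p.le, mul_one_div]
  rw [mul_assoc, mul_assoc, ← hRHS, ← mul_assoc]
  set D : ℝ := C * Real.sqrt (finrank ℚ F) with hD
  have hC0 : (0:ℝ) < C := lt_of_lt_of_le one_pos hC
  have hDpos : 0 < D := mul_pos hC0 (Real.sqrt_pos.2 (by exact_mod_cast hn))
  by_contra hcon
  push_neg at hcon
  set B := unorm F u 1 with hB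
  have h1 : X ^ ((1:ℝ) / (finrank ℚ F : ℝ)) < B / D := (lt_div_iff₀ hDpos).2 (by
    rw [mul_comm]; exact hcon)
  set t : ℝ := (X ^ ((1:ℝ) / (finrank ℚ F : ℝ)) + B / D) / 2 with htdef
  have hXr : 0 < X ^ ((1:ℝ) / (finrank ℚ F : ℝ)) := Real.rpow_pos_of_pos hXpos _
  have ht1 : X ^ ((1:ℝ) / (finrank ℚ F : ℝ)) < t := by rw [htdef]; linarith
  have ht2 : t < B / D := by rw [htdef]; linarith
  have htpos : 0 < t := lt_trans hXr ht1
  have hXt : X < t ^ (finrank ℚ F) := by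
    have h3 : (X ^ ((1:ℝ) / (finrank ℚ F : ℝ))) ^ (finrank ℚ F) < t ^ (finrank ℚ F) :=
      pow_lt_pow_left₀ ht1 hXr.le hn.ne'
    rwa [← Real.rpow_natCast (X ^ ((1:ℝ) / (finrank ℚ F : ℝ))) (finrank ℚ F),
      ← Real.rpow_mul hXpos.le, one_div, inv_mul_cancel₀ (by exact_mod_cast hn.ne'),
      Real.rpow_one] at h3
  obtain ⟨a, haI, ha0, hlt⟩ := key_minkowski F I hI u hu hnormal t htpos hXt
  have hBa : B ≤ C * unorm F u a := hred a haI ha0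
  have : B < B := by
    calc B ≤ C * unorm F u a := hBa
      _ < C * (Real.sqrt (finrank ℚ F) * t) := by
          exact mul_lt_mul_of_pos_left hlt hC0
      _ = D * t := by rw [hD]; ring
      _ < D * (B / D) := mul_lt_mul_of_pos_left ht2 hDpos
      _ = B := by field_simp
  exact lt_irrefl B this
end
end

section
/- Let F be a real quadratic field, I a fractional ideal of F regarded as a lattice in ℝ², and C ≥ 1. (a) If I contains a nonzero element g with |g₁| ≤ 1/C, |g₂| ≤ 1/C and g₁² + g₂² < 2/C² (i.e. a nonzero element of S₁), then there exist NO a₁, a₂ > 0 with 1/(C²a₁²) + 1/(C²a₂²) = 1 such that every nonzero h ∈ I satisfies h₁²/a₁² + h₂²/a₂² ≥ 1. (b) If every nonzero g ∈ I satisfies ‖g‖ ≥ √2/C, then such a₁, a₂ exist (one may take a₁ = a₂ = √2/C). -/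
open NumberField
open scoped nonZeroDivisors

noncomputable section

/-- `g` (viewed in `ℝ²` via the embeddings `σ₁, σ₂`) lies in the square
`S₁ = {(x₁,x₂) : |x₁| ≤ 1/C, |x₂| ≤ 1/C, x₁² + x₂² < 2/C²}`. -/
def inS1 {F : Type*} [Field F] (σ₁ σ₂ : F →+* ℝ) (C : ℝ) (g : F) : Prop :=
  |σ₁ g| ≤ 1 / C ∧ |σ₂ g| ≤ 1 / C ∧ (σ₁ g) ^ 2 + (σ₂ g) ^ 2 < 2 / C ^ 2

/-- The ellipse with semi-axes `a₁, a₂` passes through the vertices `(±1/C, ±1/C)` and its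
open interior contains no nonzero point of the lattice `I`. -/
def goodEllipse {F : Type*} [Field F] [NumberField F] (σ₁ σ₂ : F →+* ℝ) (C : ℝ)
    (I : FractionalIdeal (𝓞 F)⁰ F) (a₁ a₂ : ℝ) : Prop :=
  0 < a₁ ∧ 0 < a₂ ∧ 1 / (C ^ 2 * a₁ ^ 2) + 1 / (C ^ 2 * a₂ ^ 2) = 1 ∧
    ∀ h : F, h ∈ I → h ≠ 0 → 1 ≤ (σ₁ h) ^ 2 / a₁ ^ 2 + (σ₂ h) ^ 2 / a₂ ^ 2

/-- Let `F` be a real quadratic field, `I` a fractional ideal regarded as a lattice in `ℝ²`,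
`C ≥ 1`.
(a) If `I` has a nonzero element in the square `S₁`, then no ellipse through the vertices
`(±1/C, ±1/C)` has interior avoiding `I \ {0}`.
(b) If every nonzero `g ∈ I` satisfies `‖g‖ ≥ √2/C`, then such an ellipse exists; indeed one
may take `a₁ = a₂ = √2/C`. -/
theorem stmt_4 (F : Type*) [Field F] [NumberField F]
    (hdeg : Module.finrank ℚ F = 2)
    (σ₁ σ₂ : F →+* ℝ) (hσ : σ₁ ≠ σ₂)
    (I : FractionalIdeal (𝓞 F)⁰ F) (C : ℝ) (hC : 1 ≤ C) :
    ((∃ g : F, g ∈ I ∧ g ≠ 0 ∧ inS1 σ₁ σ₂ C g) →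
        ¬ ∃ a₁ a₂ : ℝ, goodEllipse σ₁ σ₂ C I a₁ a₂) ∧
    ((∀ g : F, g ∈ I → g ≠ 0 →
        Real.sqrt 2 / C ≤ Real.sqrt ((σ₁ g) ^ 2 + (σ₂ g) ^ 2)) →
      goodEllipse σ₁ σ₂ C I (Real.sqrt 2 / C) (Real.sqrt 2 / C) ∧
        ∃ a₁ a₂ : ℝ, goodEllipse σ₁ σ₂ C I a₁ a₂) := by
  have hC0 : (0:ℝ) < C := lt_of_lt_of_le one_pos hC
  constructor
  · rintro ⟨g, hgI, hg0, h1, h2, h3⟩ ⟨a₁, a₂, ha₁, ha₂, hsum, hmin⟩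
    have hge := hmin g hgI hg0
    have e1 : (σ₁ g) ^ 2 ≤ 1 / C ^ 2 := by
      have := pow_le_pow_left₀ (abs_nonneg (σ₁ g)) h1 2
      rw [sq_abs] at this
      calc (σ₁ g) ^ 2 ≤ (1 / C) ^ 2 := this
        _ = 1 / C ^ 2 := by rw [div_pow, one_pow]
    have e2 : (σ₂ g) ^ 2 ≤ 1 / C ^ 2 := by
      have := pow_le_pow_left₀ (abs_nonneg (σ₂ g)) h2 2
      rw [sq_abs] at this
      calc (σ₂ g) ^ 2 ≤ (1 / C) ^ 2 := this
        _ = 1 / C ^ 2 := by rw [div_pow, one_pow]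
    have hcase : (σ₁ g) ^ 2 < 1 / C ^ 2 ∨ (σ₂ g) ^ 2 < 1 / C ^ 2 := by
      by_contra hcon
      push_neg at hcon
      have : 2 / C ^ 2 ≤ (σ₁ g) ^ 2 + (σ₂ g) ^ 2 := by
        have := hcon.1; have := hcon.2
        have h4 : (2:ℝ) / C ^ 2 = 1 / C ^ 2 + 1 / C ^ 2 := by ring
        linarith
      linarith
    have eq1 : (1 / C ^ 2) / a₁ ^ 2 = 1 / (C ^ 2 * a₁ ^ 2) := by rw [div_div]
    have eq2 : (1 / C ^ 2) / a₂ ^ 2 = 1 / (C ^ 2 * a₂ ^ 2) := by rw [div_div]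
    have hlt : (σ₁ g) ^ 2 / a₁ ^ 2 + (σ₂ g) ^ 2 / a₂ ^ 2 < 1 := by
      rcases hcase with hc | hc
      · have k1 : (σ₁ g) ^ 2 / a₁ ^ 2 < (1 / C ^ 2) / a₁ ^ 2 := by gcongr
        have k2 : (σ₂ g) ^ 2 / a₂ ^ 2 ≤ (1 / C ^ 2) / a₂ ^ 2 := by gcongr
        rw [eq1] at k1; rw [eq2] at k2
        linarith
      · have k1 : (σ₁ g) ^ 2 / a₁ ^ 2 ≤ (1 / C ^ 2) / a₁ ^ 2 := by gcongr
        have k2 : (σ₂ g) ^ 2 / a₂ ^ 2 < (1 / C ^ 2) / a₂ ^ 2 := by gcongr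
        rw [eq1] at k1; rw [eq2] at k2
        linarith
    linarith
  · intro hmin
    have ha : 0 < Real.sqrt 2 / C := by positivity
    have hsq : (Real.sqrt 2 / C) ^ 2 = 2 / C ^ 2 := by
      rw [div_pow, Real.sq_sqrt (by norm_num : (0:ℝ) ≤ 2)]
    have key : goodEllipse σ₁ σ₂ C I (Real.sqrt 2 / C) (Real.sqrt 2 / C) := by
      refine ⟨ha, ha, ?_, ?_⟩
      · rw [hsq]
        have hc2 : C ^ 2 ≠ 0 := by positivity
        field_simp
        norm_num
      · intro h hI h0
        have hd := hmin h hI h0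
        have hsum : 2 / C ^ 2 ≤ (σ₁ h) ^ 2 + (σ₂ h) ^ 2 := by
          have := (Real.le_sqrt (x := Real.sqrt 2 / C) (y := (σ₁ h) ^ 2 + (σ₂ h) ^ 2) (by positivity) (by positivity)).mp hd
          rwa [hsq] at this
        rw [hsq, ← add_div, le_div_iff₀ (by positivity : (0:ℝ) < 2 / C ^ 2)]
        linarith
    exact ⟨key, ⟨_, _, key⟩⟩
end
end

section
/- Let F be a real quadratic field, I a fractional ideal of F regarded as a lattice in ℝ² with covolume covol(I) = √Δ_F·N(I), and C ≥ 1. Suppose a₁, a₂ > 0 satisfy 1/(C²a₁²) + 1/(C²a₂²) = 1 and the open ellipse {(x₁,x₂) : x₁²/a₁² + x₂²/a₂² < 1} contains no nonzero point of I. Then a₁ < (4/π)·C·covol(I) and a₂ < (4/π)·C·covol(I); consequently the ellipse is contained in the disc centered at the origin of radius (4/π)·C·covol(I). -/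
open NumberField
open scoped nonZeroDivisors

noncomputable section

open NumberField.InfinitePlace NumberField.mixedEmbedding MeasureTheory Module
open scoped ENNReal NNReal

private lemma norm_lt_one_iff_e2 (y : EuclideanSpace ℝ (Fin 2)) :
    ‖y‖ < 1 ↔ (y 0) ^ 2 + (y 1) ^ 2 < 1 := by
  rw [EuclideanSpace.norm_eq, Real.sqrt_lt' one_pos, one_pow, Fin.sum_univ_two]
  simp [sq_abs]

private lemma euclid_ellipse_volume (a₁ a₂ : ℝ) (ha₁ : 0 < a₁) (ha₂ : 0 < a₂) :
    volume {y : EuclideanSpace ℝ (Fin 2) | (y 0) ^ 2 / a₁ ^ 2 + (y 1) ^ 2 / a₂ ^ 2 < 1} =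
      ENNReal.ofReal (Real.pi * (a₁ * a₂)) := by
  classical
  set c : Fin 2 → ℝ := ![a₁⁻¹, a₂⁻¹] with hc
  let T : EuclideanSpace ℝ (Fin 2) →ₗ[ℝ] EuclideanSpace ℝ (Fin 2) :=
    { toFun := fun y => WithLp.toLp 2 (fun i => c i * y i)
      map_add' := fun x y => by ext i; simp [mul_add]
      map_smul' := fun m x => by ext i; simp [smul_eq_mul]; ring }
  have hdet : LinearMap.det T = a₁⁻¹ * a₂⁻¹ := by
    have hTM : LinearMap.toMatrix (PiLp.basisFun 2 ℝ (Fin 2)) (PiLp.basisFun 2 ℝ (Fin 2)) T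
        = Matrix.diagonal c := by
      ext i j
      rw [LinearMap.toMatrix_apply]
      simp only [PiLp.basisFun_repr, PiLp.basisFun_apply]
      simp [T, Matrix.diagonal_apply, Pi.single_apply, PiLp.ofLp_single, eq_comm,
        mul_ite, mul_one, mul_zero]
    rw [← LinearMap.det_toMatrix (PiLp.basisFun 2 ℝ (Fin 2)), hTM, Matrix.det_diagonal,
      Fin.prod_univ_two]
    simp [c]
  have hset : {y : EuclideanSpace ℝ (Fin 2) | (y 0) ^ 2 / a₁ ^ 2 + (y 1) ^ 2 / a₂ ^ 2 < 1}
      = ⇑T ⁻¹' Metric.ball 0 1 := by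
    ext y
    simp only [Set.mem_setOf_eq, Set.mem_preimage, Metric.mem_ball, dist_zero_right]
    rw [norm_lt_one_iff_e2]
    have h0 : (T y) 0 = a₁⁻¹ * y 0 := by simp [T, c]
    have h1 : (T y) 1 = a₂⁻¹ * y 1 := by simp [T, c]
    rw [h0, h1]
    constructor <;> intro h <;> [skip; skip] <;>
      · have := h
        field_simp at this ⊢
        nlinarith [sq_nonneg (y 0), sq_nonneg (y 1)]
  have hball : volume (Metric.ball (0 : EuclideanSpace ℝ (Fin 2)) 1) = ENNReal.ofReal Real.pi := by
    rw [EuclideanSpace.volume_ball]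
    simp only [Fintype.card_fin]
    rw [show ((2 : ℕ) : ℝ) / 2 + 1 = 2 by norm_num, Real.Gamma_two]
    simp [Real.sq_sqrt Real.pi_nonneg]
  rw [hset, MeasureTheory.Measure.addHaar_preimage_linearMap volume (by rw [hdet]; positivity) _,
    hball, hdet]
  rw [← ENNReal.ofReal_mul (by positivity)]
  congr 1
  rw [abs_of_pos (by positivity)]
  field_simp

private lemma pi_ellipse_volume {ι : Type*} [Fintype ι] (v₁ v₂ : ι) (hv : v₁ ≠ v₂)
    (hall : ∀ v : ι, v = v₁ ∨ v = v₂) (a₁ a₂ : ℝ) (ha₁ : 0 < a₁) (ha₂ : 0 < a₂) :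
    volume {y : ι → ℝ | (y v₁) ^ 2 / a₁ ^ 2 + (y v₂) ^ 2 / a₂ ^ 2 < 1} =
      ENNReal.ofReal (Real.pi * (a₁ * a₂)) := by
  classical
  have hbij : Function.Bijective ![v₁, v₂] := by
    constructor
    · intro i j hij
      fin_cases i <;> fin_cases j <;> simp_all
    · intro v
      rcases hall v with rfl | rfl
      exacts [⟨0, rfl⟩, ⟨1, rfl⟩]
  let q : Fin 2 ≃ ι := Equiv.ofBijective _ hbij
  have hq0 : q 0 = v₁ := rfl
  have hq1 : q 1 = v₂ := rfl
  have h1 := MeasureTheory.volume_measurePreserving_piCongrLeft (fun _ : ι => ℝ) q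
  have hopen : MeasurableSet {y : ι → ℝ | (y v₁) ^ 2 / a₁ ^ 2 + (y v₂) ^ 2 / a₂ ^ 2 < 1} := by
    have : Continuous fun y : ι → ℝ => (y v₁) ^ 2 / a₁ ^ 2 + (y v₂) ^ 2 / a₂ ^ 2 := by
      fun_prop
    exact (isOpen_lt this continuous_const).measurableSet
  rw [← h1.measure_preimage hopen.nullMeasurableSet]
  have hpre : (⇑(MeasurableEquiv.piCongrLeft (fun _ : ι => ℝ) q)) ⁻¹'
        {y : ι → ℝ | (y v₁) ^ 2 / a₁ ^ 2 + (y v₂) ^ 2 / a₂ ^ 2 < 1}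
      = {y : Fin 2 → ℝ | (y 0) ^ 2 / a₁ ^ 2 + (y 1) ^ 2 / a₂ ^ 2 < 1} := by
    ext y
    simp only [Set.mem_preimage, Set.mem_setOf_eq, MeasurableEquiv.coe_piCongrLeft]
    rw [← hq0, ← hq1, Equiv.piCongrLeft_apply_apply, Equiv.piCongrLeft_apply_apply]
  rw [hpre]
  have h2 := EuclideanSpace.volume_preserving_symm_measurableEquiv_toLp (Fin 2)
  have hopen2 : MeasurableSet {y : Fin 2 → ℝ | (y 0) ^ 2 / a₁ ^ 2 + (y 1) ^ 2 / a₂ ^ 2 < 1} := by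
    have : Continuous fun y : Fin 2 → ℝ => (y 0) ^ 2 / a₁ ^ 2 + (y 1) ^ 2 / a₂ ^ 2 := by fun_prop
    exact (isOpen_lt this continuous_const).measurableSet
  rw [← h2.measure_preimage hopen2.nullMeasurableSet]
  have hpre2 : (⇑(MeasurableEquiv.toLp 2 (Fin 2 → ℝ)).symm) ⁻¹'
        {y : Fin 2 → ℝ | (y 0) ^ 2 / a₁ ^ 2 + (y 1) ^ 2 / a₂ ^ 2 < 1}
      = {y : EuclideanSpace ℝ (Fin 2) | (y 0) ^ 2 / a₁ ^ 2 + (y 1) ^ 2 / a₂ ^ 2 < 1} := rfl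
  rw [hpre2]
  exact euclid_ellipse_volume a₁ a₂ ha₁ ha₂

private lemma discr_pos_of_allreal (F : Type*) [Field F] [NumberField F]
    (hreal : ∀ φ : F →+* ℂ, ∃ σ : F →+* ℝ, φ = Complex.ofRealHom.comp σ) :
    0 < NumberField.discr F := by
  classical
  have hcard : Fintype.card (Module.Free.ChooseBasisIndex ℤ (𝓞 F)) = Fintype.card (F →ₐ[ℚ] ℂ) := by
    rw [← Module.finrank_eq_card_chooseBasisIndex, RingOfIntegers.rank, AlgHom.card]
  let e : Module.Free.ChooseBasisIndex ℤ (𝓞 F) ≃ (F →ₐ[ℚ] ℂ) := Fintype.equivOfCardEq hcard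
  have key := Algebra.discr_eq_det_embeddingsMatrixReindex_pow_two ℚ ℂ (integralBasis F) e
  set s : (F →ₐ[ℚ] ℂ) → (F →+* ℝ) := fun φ => (hreal φ.toRingHom).choose with hs
  have hsspec : ∀ φ : F →ₐ[ℚ] ℂ, (φ.toRingHom : F →+* ℂ) = Complex.ofRealHom.comp (s φ) :=
    fun φ => (hreal φ.toRingHom).choose_spec
  set M : Matrix (Module.Free.ChooseBasisIndex ℤ (𝓞 F)) (Module.Free.ChooseBasisIndex ℤ (𝓞 F)) ℝ :=
    fun i j => s (e j) (integralBasis F i) with hM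
  have hmap : Algebra.embeddingsMatrixReindex ℚ ℂ (⇑(integralBasis F)) e
      = M.map Complex.ofRealHom := by
    ext i j
    have : (e j) (integralBasis F i) = ((e j).toRingHom : F →+* ℂ) (integralBasis F i) := rfl
    simp only [Algebra.embeddingsMatrixReindex, Algebra.embeddingsMatrix, Matrix.reindex_apply,
      Matrix.submatrix_apply, Matrix.of_apply, Matrix.map_apply, Equiv.refl_symm, Equiv.refl_apply,
      Equiv.symm_symm, Equiv.apply_symm_apply]
    rw [this, hsspec]
    rfl
  have hdet : (Algebra.embeddingsMatrixReindex ℚ ℂ (⇑(integralBasis F)) e).det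
      = Complex.ofRealHom M.det := by
    rw [hmap, ← RingHom.mapMatrix_apply, ← RingHom.map_det]
  have hC : ((NumberField.discr F : ℝ) : ℂ) = ((M.det ^ 2 : ℝ) : ℂ) := by
    have h1 : algebraMap ℚ ℂ ((NumberField.discr F : ℚ)) = ((NumberField.discr F : ℝ) : ℂ) := by
      push_cast; simp
    rw [← h1, NumberField.coe_discr, key, hdet]
    push_cast
    rfl
  have hR : (NumberField.discr F : ℝ) = M.det ^ 2 := by exact_mod_cast hC
  have h0 : (0 : ℝ) ≤ (NumberField.discr F : ℝ) := hR ▸ sq_nonneg _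
  have hne := NumberField.discr_ne_zero F
  have : (0:ℤ) ≤ NumberField.discr F := by exact_mod_cast h0
  omega

/-- The covolume of the lattice attached to a fractional ideal `I` of a real quadratic
field : `covol(I) = √Δ_F · N(I)`. -/
def qcovol (F : Type*) [Field F] [NumberField F] (I : FractionalIdeal (𝓞 F)⁰ F) : ℝ :=
  Real.sqrt (NumberField.discr F : ℝ) * (FractionalIdeal.absNorm I : ℝ)

set_option maxHeartbeats 1000000 in
/-- Let `F` be a real quadratic field, `I` a fractional ideal regarded as a lattice in `ℝ²`
of covolume `covol(I) = √Δ_F·N(I)`, and `C ≥ 1`. If `a₁, a₂ > 0` satisfy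
`1/(C²a₁²) + 1/(C²a₂²) = 1` and the open ellipse `{x : x₁²/a₁² + x₂²/a₂² < 1}` contains no
nonzero point of `I`, then `a₁ < (4/π)·C·covol(I)` and `a₂ < (4/π)·C·covol(I)`; consequently
the ellipse is contained in the disc centered at the origin of radius `(4/π)·C·covol(I)`. -/
theorem stmt_5 (F : Type*) [Field F] [NumberField F]
    (hdeg : Module.finrank ℚ F = 2)
    (σ₁ σ₂ : F →+* ℝ) (hσ : σ₁ ≠ σ₂)
    (I : FractionalIdeal (𝓞 F)⁰ F) (hI : I ≠ 0) (C : ℝ) (hC : 1 ≤ C)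
    (a₁ a₂ : ℝ) (ha₁ : 0 < a₁) (ha₂ : 0 < a₂)
    (hellipse : 1 / (C ^ 2 * a₁ ^ 2) + 1 / (C ^ 2 * a₂ ^ 2) = 1)
    (hempty : ∀ g : F, g ∈ I → g ≠ 0 → 1 ≤ (σ₁ g) ^ 2 / a₁ ^ 2 + (σ₂ g) ^ 2 / a₂ ^ 2) :
    a₁ < (4 / Real.pi) * C * qcovol F I ∧
    a₂ < (4 / Real.pi) * C * qcovol F I ∧
    ∀ x₁ x₂ : ℝ, x₁ ^ 2 / a₁ ^ 2 + x₂ ^ 2 / a₂ ^ 2 ≤ 1 →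
      Real.sqrt (x₁ ^ 2 + x₂ ^ 2) ≤ (4 / Real.pi) * C * qcovol F I := by
  classical
  have hofR : Function.Injective (Complex.ofRealHom : ℝ →+* ℂ) := Complex.ofReal_injective
  set τ₁ : F →+* ℂ := Complex.ofRealHom.comp σ₁ with hτ₁
  set τ₂ : F →+* ℂ := Complex.ofRealHom.comp σ₂ with hτ₂
  have hτreal : ∀ σ : F →+* ℝ, ComplexEmbedding.IsReal (Complex.ofRealHom.comp σ) := by
    intro σ
    rw [ComplexEmbedding.isReal_iff]
    ext x
    simp [ComplexEmbedding.conjugate_coe_eq]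
  have hτne : τ₁ ≠ τ₂ := by
    intro h
    exact hσ (RingHom.ext fun x => hofR (RingHom.congr_fun h x))
  have hcases : ∀ φ : F →+* ℂ, φ = τ₁ ∨ φ = τ₂ := by
    intro φ
    by_contra hc
    push_neg at hc
    have hcard : Fintype.card (F →+* ℂ) = 2 := (Embeddings.card F ℂ).trans hdeg
    have h3 : ({φ, τ₁, τ₂} : Finset (F →+* ℂ)).card ≤ 2 := hcard ▸ Finset.card_le_univ _
    rw [Finset.card_insert_of_notMem (by simp [hc.1, hc.2]),
      Finset.card_insert_of_notMem (by simp [hτne]), Finset.card_singleton] at h3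
    omega
  -- places
  set w₁ : InfinitePlace F := InfinitePlace.mk τ₁ with hw₁def
  set w₂ : InfinitePlace F := InfinitePlace.mk τ₂ with hw₂def
  have hw₁ : IsReal w₁ := isReal_mk_iff.mpr (hτreal σ₁)
  have hw₂ : IsReal w₂ := isReal_mk_iff.mpr (hτreal σ₂)
  have hw12 : w₁ ≠ w₂ := by
    intro h
    rcases mk_eq_iff.mp h with h' | h'
    · exact hτne h'
    · exact hτne ((ComplexEmbedding.isReal_iff.mp (hτreal σ₁)).symm.trans h' |>.symm ▸ rfl)
  have hallw : ∀ w : InfinitePlace F, w = w₁ ∨ w = w₂ := by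
    intro w
    rcases hcases w.embedding with h | h
    · left; rw [← mk_embedding w, h]
    · right; rw [← mk_embedding w, h]
  have hwreal : ∀ w : InfinitePlace F, IsReal w := by
    intro w; rcases hallw w with rfl | rfl; exacts [hw₁, hw₂]
  haveI hec : IsEmpty {w : InfinitePlace F // IsComplex w} :=
    ⟨fun w => (not_isReal_iff_isComplex.mpr w.2) (hwreal w.1)⟩
  have hemb1 : w₁.embedding = τ₁ := by
    rw [hw₁def]; exact embedding_mk_eq_of_isReal (hτreal σ₁)
  have hemb2 : w₂.embedding = τ₂ := by
    rw [hw₂def]; exact embedding_mk_eq_of_isReal (hτreal σ₂)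
  have hcomp₁ : ∀ g : F, (mixedEmbedding F g).1 ⟨w₁, hw₁⟩ = σ₁ g := by
    intro g
    rw [mixedEmbedding_apply_isReal]
    apply hofR
    rw [Complex.ofRealHom_eq_coe, embedding_of_isReal_apply]
    show w₁.embedding g = _
    rw [hemb1]
    rfl
  have hcomp₂ : ∀ g : F, (mixedEmbedding F g).1 ⟨w₂, hw₂⟩ = σ₂ g := by
    intro g
    rw [mixedEmbedding_apply_isReal]
    apply hofR
    rw [Complex.ofRealHom_eq_coe, embedding_of_isReal_apply]
    show w₂.embedding g = _
    rw [hemb2]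
    rfl
  set v₁ : {w : InfinitePlace F // IsReal w} := ⟨w₁, hw₁⟩ with hv₁def
  set v₂ : {w : InfinitePlace F // IsReal w} := ⟨w₂, hw₂⟩ with hv₂def
  have hv : v₁ ≠ v₂ := fun h => hw12 (congrArg Subtype.val h)
  have hvall : ∀ v : {w : InfinitePlace F // IsReal w}, v = v₁ ∨ v = v₂ := by
    intro v
    rcases hallw v.1 with h | h
    · left; exact Subtype.ext h
    · right; exact Subtype.ext h
  -- discriminant and norm positivity
  have hdiscr : 0 < NumberField.discr F :=
    discr_pos_of_allreal F (fun φ => (hcases φ).elim (fun h => ⟨σ₁, h⟩) (fun h => ⟨σ₂, h⟩))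
  have hN : 0 < (FractionalIdeal.absNorm I : ℝ) := by
    have h0 : FractionalIdeal.absNorm I ≠ 0 := fun h =>
      hI (FractionalIdeal.absNorm_eq_zero_iff.mp h)
    have := FractionalIdeal.absNorm_nonneg I
    exact_mod_cast lt_of_le_of_ne this (Ne.symm h0)
  have hq : 0 < qcovol F I :=
    mul_pos (Real.sqrt_pos.mpr (by exact_mod_cast hdiscr)) hN
  -- the convex body
  set S : Set (mixedSpace F) :=
    {x | (x.1 v₁) ^ 2 / a₁ ^ 2 + (x.1 v₂) ^ 2 / a₂ ^ 2 < 1} with hSdef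
  set c : Fin 2 → ℝ := ![a₁⁻¹, a₂⁻¹] with hcdef
  set vv : Fin 2 → {w : InfinitePlace F // IsReal w} := ![v₁, v₂] with hvvdef
  let g : (mixedSpace F) →ₗ[ℝ] EuclideanSpace ℝ (Fin 2) :=
    { toFun := fun x => WithLp.toLp 2 (fun i => x.1 (vv i) * c i)
      map_add' := fun x y => by ext i; simp [add_mul]
      map_smul' := fun m x => by ext i; simp [smul_eq_mul]; ring }
  have hsq : ∀ t a : ℝ, (t * a⁻¹) ^ 2 = t ^ 2 / a ^ 2 := fun t a => by ring
  have hgS : S = ⇑g ⁻¹' Metric.ball 0 1 := by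
    ext x
    simp only [hSdef, Set.mem_setOf_eq, Set.mem_preimage, Metric.mem_ball, dist_zero_right]
    rw [norm_lt_one_iff_e2]
    have h0 : g x 0 = x.1 v₁ * a₁⁻¹ := rfl
    have h1 : g x 1 = x.1 v₂ * a₂⁻¹ := rfl
    rw [h0, h1, hsq, hsq]
  have hconv : Convex ℝ S :=
    hgS ▸ (convex_ball (0 : EuclideanSpace ℝ (Fin 2)) 1).linear_preimage g
  have hsymm : ∀ x ∈ S, -x ∈ S := by
    intro x hx
    rw [hgS] at hx ⊢
    simp only [Set.mem_preimage, map_neg, Metric.mem_ball, dist_zero_right, norm_neg] at hx ⊢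
    exact hx
  -- the volume of the convex body
  have hvolS : volume S = ENNReal.ofReal (Real.pi * (a₁ * a₂)) := by
    have hprod : S = {y : {w : InfinitePlace F // IsReal w} → ℝ |
        (y v₁) ^ 2 / a₁ ^ 2 + (y v₂) ^ 2 / a₂ ^ 2 < 1} ×ˢ
        (Set.univ : Set ({w : InfinitePlace F // IsComplex w} → ℂ)) := by
      ext x
      simp [hSdef, Set.mem_prod]
    rw [hprod, show (volume : Measure (mixedSpace F)) = Measure.prod volume volume from
      Measure.volume_eq_prod _ _, Measure.prod_prod,
      pi_ellipse_volume v₁ v₂ hv hvall a₁ a₂ ha₁ ha₂]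
    have huniv : volume (Set.univ : Set ({w : InfinitePlace F // IsComplex w} → ℂ)) = 1 := by
      rw [MeasureTheory.volume_pi, MeasureTheory.Measure.pi_univ]
      simp
    rw [huniv, mul_one]
  -- Minkowski
  set U : (FractionalIdeal (𝓞 F)⁰ F)ˣ := Units.mk0 I hI with hUdef
  have hvol_le : volume S ≤
      volume (ZSpan.fundamentalDomain (fractionalIdealLatticeBasis F U)) *
        2 ^ finrank ℝ (mixedSpace F) := by
    by_contra hlt
    push_neg at hlt
    have h_fund := ZSpan.isAddFundamentalDomain' (fractionalIdealLatticeBasis F U) volume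
    have : Countable (Submodule.span ℤ
        (Set.range (fractionalIdealLatticeBasis F U))).toAddSubgroup := by
      change Countable (Submodule.span ℤ (Set.range (fractionalIdealLatticeBasis F U)))
      infer_instance
    obtain ⟨⟨x, hx⟩, h_nz, h_mem⟩ :=
      exists_ne_zero_mem_lattice_of_measure_mul_two_pow_lt_measure h_fund hsymm hconv hlt
    rw [Submodule.mem_toAddSubgroup, mem_span_fractionalIdealLatticeBasis] at hx
    obtain ⟨a, ha, rfl⟩ := hx
    have ha0 : a ≠ 0 := by simpa using h_nz
    have haI : a ∈ I := by simpa [hUdef] using ha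
    have hge := hempty a haI ha0
    have hlt' : (σ₁ a) ^ 2 / a₁ ^ 2 + (σ₂ a) ^ 2 / a₂ ^ 2 < 1 := by
      have := h_mem
      rw [hSdef] at this
      simpa only [Set.mem_setOf_eq, hcomp₁ a, hcomp₂ a] using this
    linarith
  have hfinrank : finrank ℝ (mixedSpace F) = 2 := by
    rw [mixedEmbedding.finrank, hdeg]
  have h0 : nrComplexPlaces F = 0 := by
    simp [nrComplexPlaces, Fintype.card_eq_zero]
  have habs : ((NNReal.sqrt ‖NumberField.discr F‖₊ : ℝ≥0) : ℝ≥0∞)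
      = ENNReal.ofReal (Real.sqrt (NumberField.discr F : ℝ)) := by
    rw [← ENNReal.ofReal_coe_nnreal]
    congr 1
    rw [Real.coe_sqrt, coe_nnnorm, Int.norm_eq_abs,
      abs_of_pos (show (0:ℝ) < ((NumberField.discr F : ℤ) : ℝ) by exact_mod_cast hdiscr)]
  have hfd : volume (ZSpan.fundamentalDomain (fractionalIdealLatticeBasis F U)) =
      ENNReal.ofReal ((FractionalIdeal.absNorm I : ℝ)) *
        ENNReal.ofReal (Real.sqrt (NumberField.discr F : ℝ)) := by
    rw [volume_fundamentalDomain_fractionalIdealLatticeBasis,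
      volume_fundamentalDomain_latticeBasis, h0, pow_zero, one_mul, habs]
    rfl
  have hmain : Real.pi * (a₁ * a₂) ≤
      (FractionalIdeal.absNorm I : ℝ) * Real.sqrt (NumberField.discr F : ℝ) * 4 := by
    have h4 : (2 : ℝ≥0∞) ^ finrank ℝ (mixedSpace F) = ENNReal.ofReal 4 := by
      rw [hfinrank]
      norm_num
    rw [hvolS, hfd, h4, ← ENNReal.ofReal_mul hN.le,
      ← ENNReal.ofReal_mul (by positivity)] at hvol_le
    exact (ENNReal.ofReal_le_ofReal_iff (by positivity)).mp hvol_le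
  have hq4 : a₁ * a₂ ≤ 4 / Real.pi * qcovol F I := by
    rw [qcovol, div_mul_eq_mul_div, le_div_iff₀ Real.pi_pos]
    nlinarith [hmain]
  -- the ellipse condition gives `1 < C * aᵢ`
  have hC0 : (0:ℝ) < C := lt_of_lt_of_le one_pos hC
  have ht₁ : 0 < 1 / (C ^ 2 * a₁ ^ 2) := by positivity
  have ht₂ : 0 < 1 / (C ^ 2 * a₂ ^ 2) := by positivity
  have h1 : 1 < C ^ 2 * a₁ ^ 2 := by
    have hlt : 1 / (C ^ 2 * a₁ ^ 2) < 1 := by linarith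
    have := (div_lt_one (by positivity : (0:ℝ) < C ^ 2 * a₁ ^ 2)).mp hlt
    linarith
  have h2 : 1 < C ^ 2 * a₂ ^ 2 := by
    have hlt : 1 / (C ^ 2 * a₂ ^ 2) < 1 := by linarith
    have := (div_lt_one (by positivity : (0:ℝ) < C ^ 2 * a₂ ^ 2)).mp hlt
    linarith
  have hCa₁ : 1 < C * a₁ := by nlinarith [mul_pos hC0 ha₁]
  have hCa₂ : 1 < C * a₂ := by nlinarith [mul_pos hC0 ha₂]
  have hK : 0 < 4 / Real.pi * qcovol F I := by
    have := Real.pi_pos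
    positivity
  have ha₁R : a₁ < 4 / Real.pi * C * qcovol F I := by
    calc a₁ = a₁ * 1 := (mul_one _).symm
    _ < a₁ * (C * a₂) := by exact mul_lt_mul_of_pos_left hCa₂ ha₁
    _ = C * (a₁ * a₂) := by ring
    _ ≤ C * (4 / Real.pi * qcovol F I) := mul_le_mul_of_nonneg_left hq4 hC0.le
    _ = 4 / Real.pi * C * qcovol F I := by ring
  have ha₂R : a₂ < 4 / Real.pi * C * qcovol F I := by
    calc a₂ = a₂ * 1 := (mul_one _).symm
    _ < a₂ * (C * a₁) := by exact mul_lt_mul_of_pos_left hCa₁ ha₂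
    _ = C * (a₁ * a₂) := by ring
    _ ≤ C * (4 / Real.pi * qcovol F I) := mul_le_mul_of_nonneg_left hq4 hC0.le
    _ = 4 / Real.pi * C * qcovol F I := by ring
  refine ⟨ha₁R, ha₂R, ?_⟩
  intro x₁ x₂ hx
  set R := 4 / Real.pi * C * qcovol F I with hRdef
  have hR0 : 0 < R := lt_trans ha₁ ha₁R
  have hsum : x₁ ^ 2 + x₂ ^ 2 ≤ R ^ 2 := by
    have e₁ : x₁ ^ 2 = a₁ ^ 2 * (x₁ ^ 2 / a₁ ^ 2) := by field_simp
    have e₂ : x₂ ^ 2 = a₂ ^ 2 * (x₂ ^ 2 / a₂ ^ 2) := by field_simp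
    have t₁ : 0 ≤ x₁ ^ 2 / a₁ ^ 2 := by positivity
    have t₂ : 0 ≤ x₂ ^ 2 / a₂ ^ 2 := by positivity
    have hsq₁ : a₁ ^ 2 ≤ R ^ 2 := by nlinarith
    have hsq₂ : a₂ ^ 2 ≤ R ^ 2 := by nlinarith
    have k₁ : a₁ ^ 2 * (x₁ ^ 2 / a₁ ^ 2) ≤ R ^ 2 * (x₁ ^ 2 / a₁ ^ 2) :=
      mul_le_mul_of_nonneg_right hsq₁ t₁
    have k₂ : a₂ ^ 2 * (x₂ ^ 2 / a₂ ^ 2) ≤ R ^ 2 * (x₂ ^ 2 / a₂ ^ 2) :=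
      mul_le_mul_of_nonneg_right hsq₂ t₂
    nlinarith [sq_nonneg R]
  calc Real.sqrt (x₁ ^ 2 + x₂ ^ 2) ≤ Real.sqrt (R ^ 2) := Real.sqrt_le_sqrt hsum
  _ = R := Real.sqrt_sq hR0.le
end
end

section
/- Let F be a real quadratic field, C ≥ 1, and let I be a fractional ideal of F satisfying condition (⋆). Then covol(I) < 2/C, i.e. √Δ_F·N(I) < 2/C. -/
open NumberField
open scoped nonZeroDivisors

noncomputable section

/-- Euclidean length of the image of `g ∈ F` in `ℝ²` under the two real embeddings. -/
def qnorm {F : Type*} [Field F] (σ₁ σ₂ : F →+* ℝ) (g : F) : ℝ :=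
  Real.sqrt ((σ₁ g) ^ 2 + (σ₂ g) ^ 2)

/-- `‖g‖_u` for a metric `u = (u₁, u₂)` : `‖g‖_u² = u₁²g₁² + u₂²g₂²`.
In particular `‖1‖_u = ‖u‖`. -/
def qnormu {F : Type*} [Field F] (σ₁ σ₂ : F →+* ℝ) (u₁ u₂ : ℝ) (g : F) : ℝ :=
  Real.sqrt (u₁ ^ 2 * (σ₁ g) ^ 2 + u₂ ^ 2 * (σ₂ g) ^ 2)

/-- Condition `(⋆)` : (1) `1` is primitive in `I`; (2) `I` has no nonzero element in `S₁`;
(3) the shortest nonzero vector `f` of `I` satisfies `1/C < ‖f‖ < √2/C`. -/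
def starCond (F : Type*) [Field F] [NumberField F] (σ₁ σ₂ : F →+* ℝ) (C : ℝ)
    (I : FractionalIdeal (𝓞 F)⁰ F) : Prop :=
  primitiveOne F I ∧
  (∀ g : F, g ∈ I → g ≠ 0 → ¬ inS1 σ₁ σ₂ C g) ∧
  (∃ f : F, f ∈ I ∧ f ≠ 0 ∧ (∀ g : F, g ∈ I → g ≠ 0 → qnorm σ₁ σ₂ f ≤ qnorm σ₁ σ₂ g) ∧
     1 / C < qnorm σ₁ σ₂ f ∧ qnorm σ₁ σ₂ f < Real.sqrt 2 / C)

/-- The set `G = {g ∈ I, g ≠ 0 : (g₁² − 1/C²)(g₂² − 1/C²) < 0, ‖g‖ < (4/π)·C·covol(I)}`. -/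
def inG (F : Type*) [Field F] [NumberField F] (σ₁ σ₂ : F →+* ℝ) (C : ℝ)
    (I : FractionalIdeal (𝓞 F)⁰ F) (g : F) : Prop :=
  g ∈ I ∧ g ≠ 0 ∧ ((σ₁ g) ^ 2 - 1 / C ^ 2) * ((σ₂ g) ^ 2 - 1 / C ^ 2) < 0 ∧
    qnorm σ₁ σ₂ g < (4 / Real.pi) * C * qcovol F I


open Module in
private theorem trace_form (F : Type*) [Field F] [NumberField F] (hdeg : Module.finrank ℚ F = 2)
    (σ₁ σ₂ : F →+* ℝ) (hσ : σ₁ ≠ σ₂) (x : F) :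
    ((Algebra.trace ℚ F x : ℚ) : ℝ) = σ₁ x + σ₂ x := by
  classical
  set τ₁ : F →ₐ[ℚ] ℂ := (Complex.ofRealHom.comp σ₁).toRatAlgHom with hτ₁
  set τ₂ : F →ₐ[ℚ] ℂ := (Complex.ofRealHom.comp σ₂).toRatAlgHom with hτ₂
  have happ₁ : ∀ y, τ₁ y = (σ₁ y : ℂ) := fun y => rfl
  have happ₂ : ∀ y, τ₂ y = (σ₂ y : ℂ) := fun y => rfl
  have hne : τ₁ ≠ τ₂ := by
    intro h
    apply hσ
    ext y
    have h2 := congrArg (fun φ => φ y) h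
    simp only [happ₁, happ₂, Complex.ofReal_inj] at h2
    exact h2
  have huniv : (Finset.univ : Finset (F →ₐ[ℚ] ℂ)) = {τ₁, τ₂} := by
    symm
    apply Finset.eq_univ_of_card
    rw [Finset.card_pair hne, AlgHom.card ℚ F ℂ, hdeg]
  have htr := trace_eq_sum_embeddings (K := ℚ) (L := F) (E := ℂ) (x := x)
  rw [huniv, Finset.sum_pair hne] at htr
  have : ((((Algebra.trace ℚ F x : ℚ) : ℝ)) : ℂ) = ((σ₁ x + σ₂ x : ℝ) : ℂ) := by
    rw [Complex.ofReal_ratCast]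
    rw [show ((Algebra.trace ℚ F x : ℚ) : ℂ) = algebraMap ℚ ℂ (Algebra.trace ℚ F x) by
      norm_cast]
    rw [htr, happ₁, happ₂]
    push_cast
    ring
  exact_mod_cast this

private theorem rat_case (F : Type*) [Field F] [NumberField F] (I : FractionalIdeal (𝓞 F)⁰ F)
    (h1 : (1 : F) ∈ I) (hprim : ∀ d : ℤ, 2 ≤ d → (1 : F) / (d : F) ∉ I)
    (q : ℚ) (hq : ((q : F) ∈ I)) (hq0 : q ≠ 0) (hq1 : |q| < 1) : False := by
  have hdpos : 0 < q.den := q.pos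
  have hden : 2 ≤ q.den := by
    by_contra h
    have hd : q.den = 1 := by omega
    have hq' : (q.num : ℚ) = q := by
      rw [← Rat.num_div_den q, hd]; simp
    have hnum : q.num ≠ 0 := Rat.num_ne_zero.mpr hq0
    have : (1 : ℚ) ≤ |q| := by
      rw [← hq', ← Int.cast_abs]
      exact_mod_cast Int.one_le_abs hnum
    linarith
  have hco : Int.gcd q.num (q.den : ℤ) = 1 := q.reduced
  obtain ⟨x, y, hxy⟩ := Int.isCoprime_iff_gcd_eq_one.mpr hco
  have hmem : x • (q : F) + y • (1 : F) ∈ I := by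
    rw [← FractionalIdeal.mem_coe] at hq h1 ⊢
    exact Submodule.add_mem _ (zsmul_mem hq x) (zsmul_mem h1 y)
  have hden0 : (q.den : ℚ) ≠ 0 := by positivity
  have hval : x • (q : F) + y • (1 : F) = (1 : F) / ((q.den : ℤ) : F) := by
    have hqd : q * (q.den : ℚ) = (q.num : ℚ) := by
      have h2 : ((q.num : ℚ) / (q.den : ℚ)) * (q.den : ℚ) = (q.num : ℚ) :=
        div_mul_cancel₀ _ hden0
      rwa [Rat.num_div_den] at h2
    have hq' : (x : ℚ) * q + y = 1 / (q.den : ℚ) := by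
      rw [eq_div_iff hden0, add_mul, mul_assoc, hqd]
      exact_mod_cast hxy
    calc x • (q : F) + y • (1 : F) = (((x : ℚ) * q + y : ℚ) : F) := by
          simp only [zsmul_eq_mul]; push_cast; ring
    _ = ((1 / (q.den : ℚ) : ℚ) : F) := by rw [hq']
    _ = (1 : F) / ((q.den : ℤ) : F) := by push_cast; ring
  rw [hval] at hmem
  exact hprim (q.den : ℤ) (by exact_mod_cast hden) hmem

open Module in
private theorem key_eq (F : Type*) [Field F] [NumberField F] (hdeg : Module.finrank ℚ F = 2)
    (σ₁ σ₂ : F →+* ℝ) (hσ : σ₁ ≠ σ₂) (I : FractionalIdeal (𝓞 F)⁰ F) (hI0 : I ≠ 0)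
    (f : F) (hf : f ∈ I) (h1 : (1 : F) ∈ I) :
    ∃ k : ℤ, (σ₁ f - σ₂ f) ^ 2 =
      (k : ℝ) ^ 2 * ((FractionalIdeal.absNorm I : ℚ) : ℝ) ^ 2 * ((NumberField.discr F : ℤ) : ℝ) := by
  classical
  set ι := Module.Free.ChooseBasisIndex ℤ (𝓞 F) with hι
  set Iu : (FractionalIdeal (𝓞 F)⁰ F)ˣ := Units.mk0 I hI0 with hIu
  have hcard : Fintype.card ι = 2 := by
    rw [← Module.finrank_eq_card_chooseBasisIndex, RingOfIntegers.rank, hdeg]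
  have ecard : Fintype.card ι = Fintype.card (Module.Free.ChooseBasisIndex ℤ Iu) := by
    rw [← Module.finrank_eq_card_chooseBasisIndex, ← Module.finrank_eq_card_chooseBasisIndex,
      fractionalIdeal_rank F Iu, RingOfIntegers.rank]
  set e : ι ≃ Module.Free.ChooseBasisIndex ℤ Iu := Fintype.equivOfCardEq ecard with he
  set B : Basis ι ℚ F := (basisOfFractionalIdeal F Iu).reindex e.symm with hB
  have hdetB : |(integralBasis F).det ⇑B| = (FractionalIdeal.absNorm I : ℚ) :=
    det_basisOfFractionalIdeal_eq_absNorm F Iu e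
  -- integral coordinates of elements of I
  have hrepr : ∀ x : F, x ∈ I → ∀ i, ∃ z : ℤ, (z : ℚ) = B.repr x i := by
    intro x hx i
    have hsp : x ∈ Submodule.span ℤ (Set.range ⇑B) := by
      have hr : Set.range ⇑B = Set.range ⇑(basisOfFractionalIdeal F Iu) := by
        rw [hB, Basis.coe_reindex]
        simp only [Equiv.symm_symm]
        exact Function.Surjective.range_comp e.surjective _
      rw [hr, mem_span_basisOfFractionalIdeal]
      exact hx
    obtain ⟨z, hz⟩ := (B.mem_span_iff_repr_mem ℤ x).mp hsp i
    exact ⟨z, hz⟩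
  set κ : Fin 2 ≃ ι := (Fintype.equivFinOfCardEq hcard).symm with hκ
  set c : ι → F := ![1, f] ∘ ⇑κ.symm with hc
  have hc_mem : ∀ i, c i ∈ I := by
    intro i
    have : ∀ j : Fin 2, ![(1 : F), f] j ∈ I := by
      intro j
      fin_cases j
      exacts [h1, hf]
    exact this _
  set P : Matrix ι ι ℚ := B.toMatrix c with hPdef
  set A₀ : Matrix ι ι ℤ := fun i j => (P i j).num with hA₀
  have hP : P = A₀.map (algebraMap ℤ ℚ) := by
    ext i j
    obtain ⟨z, hz⟩ := hrepr (c j) (hc_mem j) i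
    have hpij : P i j = (z : ℚ) := by rw [hPdef, Basis.toMatrix_apply, ← hz]
    rw [Matrix.map_apply, hA₀]
    show P i j = ((P i j).num : ℚ)
    rw [hpij]
    simp
  have hvec : c = Matrix.vecMul ⇑B (P.map (algebraMap ℚ F)) := by
    funext j
    simp only [Matrix.vecMul, dotProduct, Matrix.map_apply, hPdef, Basis.toMatrix_apply]
    conv_lhs => rw [← B.sum_repr (c j)]
    refine Finset.sum_congr rfl fun i _ => ?_
    rw [Algebra.smul_def, mul_comm]
  have hdiscr1 : Algebra.discr ℚ c = P.det ^ 2 * Algebra.discr ℚ ⇑B := by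
    conv_lhs => rw [hvec]
    exact Algebra.discr_of_matrix_vecMul ⇑B P
  set Q : Matrix ι ι ℚ := (integralBasis F).toMatrix ⇑B with hQdef
  have hvec2 : ⇑B = Matrix.vecMul ⇑(integralBasis F) (Q.map (algebraMap ℚ F)) := by
    funext j
    simp only [Matrix.vecMul, dotProduct, Matrix.map_apply, hQdef, Basis.toMatrix_apply]
    conv_lhs => rw [← (integralBasis F).sum_repr (B j)]
    refine Finset.sum_congr rfl fun i _ => ?_
    rw [Algebra.smul_def, mul_comm]
  have hdiscr2 : Algebra.discr ℚ ⇑B = Q.det ^ 2 * Algebra.discr ℚ ⇑(integralBasis F) := by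
    conv_lhs => rw [hvec2]
    exact Algebra.discr_of_matrix_vecMul _ Q
  have hQdet : Q.det = (integralBasis F).det ⇑B := ((integralBasis F).det_apply ⇑B).symm
  have hPdet : P.det = ((A₀.det : ℤ) : ℚ) := by
    rw [hP, ← RingHom.mapMatrix_apply, ← RingHom.map_det]
    simp
  -- the trace matrix computation
  have hdiscr0 : Algebra.discr ℚ c =
      Algebra.trace ℚ F 1 * Algebra.trace ℚ F (f * f)
        - Algebra.trace ℚ F f * Algebra.trace ℚ F f := by
    rw [Algebra.discr_def]
    have hM : Algebra.traceMatrix ℚ c =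
        Matrix.reindex κ κ (Algebra.traceMatrix ℚ ![1, f]) := by
      ext i j
      rfl
    rw [hM, Matrix.det_reindex_self, Matrix.det_fin_two]
    simp [Algebra.traceMatrix_apply, Algebra.traceForm_apply]
  -- combine over ℚ
  have hQQ : Algebra.discr ℚ c =
      ((A₀.det : ℤ) : ℚ) ^ 2 * ((integralBasis F).det ⇑B) ^ 2 * ((NumberField.discr F : ℤ) : ℚ) := by
    rw [hdiscr1, hdiscr2, hPdet, hQdet, coe_discr]
    ring
  refine ⟨A₀.det, ?_⟩
  -- cast to ℝ
  have hcast := congrArg (fun q : ℚ => (q : ℝ)) hQQ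
  rw [hdiscr0] at hcast
  push_cast at hcast
  rw [trace_form F hdeg σ₁ σ₂ hσ 1, trace_form F hdeg σ₁ σ₂ hσ (f * f),
    trace_form F hdeg σ₁ σ₂ hσ f] at hcast
  simp only [map_one, map_mul] at hcast
  have hdet2 : (((integralBasis F).det ⇑B : ℚ) : ℝ) ^ 2
      = ((FractionalIdeal.absNorm I : ℚ) : ℝ) ^ 2 := by
    have := congrArg (fun q : ℚ => ((q : ℝ)) ^ 2) hdetB
    rw [← this]
    push_cast
    rw [sq_abs]
  rw [hdet2] at hcast
  have hA : ((A₀.map (fun x : ℤ => (x : ℚ))).map (fun x : ℚ => (x : ℝ))).det = ((A₀.det : ℤ) : ℝ) := by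
    rw [Matrix.map_map]
    have hfun : ((fun x : ℚ => (x : ℝ)) ∘ fun x : ℤ => (x : ℚ)) = ⇑(Int.castRingHom ℝ) := by
      funext x; simp
    rw [hfun, ← RingHom.mapMatrix_apply, ← RingHom.map_det]
    rfl
  rw [hA] at hcast
  nlinarith [hcast]

/-- Let `F` be a real quadratic field, `C ≥ 1`, and `I` a fractional ideal satisfying
condition `(⋆)`. Then `covol(I) < 2/C`, i.e. `√Δ_F·N(I) < 2/C`. -/
theorem stmt_7 (F : Type*) [Field F] [NumberField F]
    (hdeg : Module.finrank ℚ F = 2)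
    (σ₁ σ₂ : F →+* ℝ) (hσ : σ₁ ≠ σ₂)
    (C : ℝ) (hC : 1 ≤ C) (I : FractionalIdeal (𝓞 F)⁰ F)
    (hstar : starCond F σ₁ σ₂ C I) :
    qcovol F I < 2 / C := by
  
  classical
  obtain ⟨⟨h1, hprim⟩, hS1, f, hfI, hf0, hmin, hflb, hfub⟩ := hstar
  have hC0 : (0:ℝ) < C := lt_of_lt_of_le one_pos hC
  have hI0 : I ≠ 0 := by
    rintro rfl
    rw [FractionalIdeal.mem_zero_iff] at h1
    exact one_ne_zero h1
  set a := σ₁ f with ha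
  set b := σ₂ f with hb
  have hsqrt2 : (0:ℝ) < Real.sqrt 2 := Real.sqrt_pos.mpr (by norm_num)
  have hqnn : 0 ≤ qnorm σ₁ σ₂ f := Real.sqrt_nonneg _
  have hab2 : a ^ 2 + b ^ 2 < 2 / C ^ 2 := by
    have hnn : (0:ℝ) ≤ a ^ 2 + b ^ 2 := by positivity
    have h2 := hfub
    unfold qnorm at h2
    have hs := Real.sq_sqrt hnn
    have h3 : Real.sqrt (a ^ 2 + b ^ 2) < Real.sqrt 2 / C := h2
    have h4 : (Real.sqrt (a ^ 2 + b ^ 2)) ^ 2 < (Real.sqrt 2 / C) ^ 2 := by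
      apply pow_lt_pow_left₀ h3 (Real.sqrt_nonneg _)
      norm_num
    rw [hs, div_pow, Real.sq_sqrt (by norm_num : (0:ℝ) ≤ 2)] at h4
    exact h4
  by_cases hab : a = b
  · -- f is rational : contradiction with primitivity
    exfalso
    set t := Algebra.trace ℚ F f with ht
    have htr : ((t : ℚ) : ℝ) = a + b := trace_form F hdeg σ₁ σ₂ hσ f
    set q : ℚ := t / 2 with hq
    have hσq : σ₁ ((q : F)) = (q : ℝ) := by
      rw [map_ratCast]
    have hfq : f = (q : F) := by
      apply RingHom.injective σ₁
      rw [hσq]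
      push_cast [hq]
      rw [htr, ← hab]
      ring
    have hq0 : q ≠ 0 := by
      intro h
      apply hf0
      rw [hfq, h]
      simp
    have hq1 : |q| < 1 := by
      have hC2 : (1:ℝ) ≤ C ^ 2 := by nlinarith
      have h2C : 2 / C ^ 2 ≤ 2 := by
        rw [div_le_iff₀ (by nlinarith)]
        nlinarith
    -- a = (q:ℝ)
      have haq : a = (q : ℝ) := by rw [ha, hfq, hσq]
      have hbq : b = (q : ℝ) := by rw [← hab, haq]
      have hq2 : ((q:ℝ)) ^ 2 < 1 := by
        rw [haq, hbq] at hab2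
        nlinarith
      have : |(q:ℝ)| < 1 := by
        nlinarith [sq_abs ((q:ℝ)), abs_nonneg ((q:ℝ))]
      have := this
      rw [← Rat.cast_abs] at this
      exact_mod_cast this
    exact rat_case F I h1 hprim q (by rwa [← hfq]) hq0 hq1
  · obtain ⟨k, hk⟩ := key_eq F hdeg σ₁ σ₂ hσ I hI0 f hfI h1
    set N : ℝ := ((FractionalIdeal.absNorm I : ℚ) : ℝ) with hN
    set D : ℝ := ((NumberField.discr F : ℤ) : ℝ) with hD
    have hNpos : 0 < N := by
      have h0 : FractionalIdeal.absNorm I ≠ 0 :=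
        fun h => hI0 (FractionalIdeal.absNorm_eq_zero_iff.mp h)
      have h1' : 0 ≤ FractionalIdeal.absNorm I := FractionalIdeal.absNorm_nonneg I
      have : 0 < FractionalIdeal.absNorm I := lt_of_le_of_ne h1' (Ne.symm h0)
      rw [hN]
      exact_mod_cast this
    have hlhs : 0 < (a - b) ^ 2 := by
      have := sub_ne_zero.mpr hab
      positivity
    have hk0 : k ≠ 0 := by
      rintro rfl
      rw [hk] at hlhs
      simp at hlhs
    have hk1 : (1:ℝ) ≤ (k : ℝ) ^ 2 := by
      have h2 : (1:ℤ) ≤ k ^ 2 := by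
        have h3 := Int.one_le_abs hk0
        nlinarith [sq_abs k, h3]
      exact_mod_cast h2
    have hDnn : 0 ≤ D := by
      by_contra h
      push_neg at h
      have hneg : (k:ℝ) ^ 2 * N ^ 2 * D < 0 :=
        mul_neg_of_pos_of_neg (by positivity) h
      rw [← hk] at hneg
      linarith
    have hcov : qcovol F I ≤ |a - b| := by
      have hcoveq : qcovol F I = Real.sqrt (D * N ^ 2) := by
        rw [qcovol, Real.sqrt_mul hDnn, Real.sqrt_sq hNpos.le]
      rw [hcoveq, ← Real.sqrt_sq_eq_abs]
      apply Real.sqrt_le_sqrt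
      nlinarith
    have habs : |a - b| ≤ Real.sqrt 2 * qnorm σ₁ σ₂ f := by
      have h2 : (a - b) ^ 2 ≤ 2 * (a ^ 2 + b ^ 2) := by nlinarith [sq_nonneg (a + b)]
      rw [← Real.sqrt_sq_eq_abs]
      calc Real.sqrt ((a - b) ^ 2) ≤ Real.sqrt (2 * (a ^ 2 + b ^ 2)) := Real.sqrt_le_sqrt h2
      _ = Real.sqrt 2 * qnorm σ₁ σ₂ f := by
          rw [Real.sqrt_mul (by norm_num : (0:ℝ) ≤ 2)]
          rfl
    have hfin : Real.sqrt 2 * qnorm σ₁ σ₂ f < 2 / C := by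
      have h2 : Real.sqrt 2 * qnorm σ₁ σ₂ f < Real.sqrt 2 * (Real.sqrt 2 / C) :=
        mul_lt_mul_of_pos_left hfub hsqrt2
      have h3 : Real.sqrt 2 * (Real.sqrt 2 / C) = 2 / C := by
        rw [← mul_div_assoc, Real.mul_self_sqrt (by norm_num : (0:ℝ) ≤ 2)]
      linarith
    linarith
end
end

section
/- Let F be a real quadratic field, C ≥ 1, and let I be a fractional ideal of F satisfying condition (⋆). Then every g ∈ G satisfies ‖g‖ < 8/π; that is, G is contained in the set {g ∈ I nonzero : (g₁² − 1/C²)·(g₂² − 1/C²) < 0 and ‖g‖ < 8/π}. Moreover, any a₁, a₂ > 0 with 1/(C²a₁²) + 1/(C²a₂²) = 1 such that the open ellipse {x : x₁²/a₁² + x₂²/a₂² < 1} contains no nonzero point of I satisfy a₁ < 8/π and a₂ < 8/π. -/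
open NumberField
open scoped nonZeroDivisors

noncomputable section

namespace Stmt8Aux

open Module Matrix MeasureTheory
open scoped ENNReal NNReal


lemma traceR {F : Type*} [Field F] [NumberField F]
    (hdeg : Module.finrank ℚ F = 2)
    (σ₁ σ₂ : F →+* ℝ) (hσ : σ₁ ≠ σ₂) (x : F) :
    ((Algebra.trace ℚ F x : ℚ) : ℝ) = σ₁ x + σ₂ x := by
  let c : ℝ →+* ℂ := Complex.ofRealHom
  let τ₁ : F →ₐ[ℚ] ℂ := RingHom.equivRatAlgHom F ℂ (c.comp σ₁)
  let τ₂ : F →ₐ[ℚ] ℂ := RingHom.equivRatAlgHom F ℂ (c.comp σ₂)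
  have hτ : τ₁ ≠ τ₂ := by
    intro h
    apply hσ
    have h' : c.comp σ₁ = c.comp σ₂ := (RingHom.equivRatAlgHom F ℂ).injective h
    ext x
    have := congrArg (fun (φ : F →+* ℂ) => φ x) h'
    simpa [c, Complex.ofReal_inj] using this
  have hcard : Fintype.card (F →ₐ[ℚ] ℂ) = 2 := by
    rw [AlgHom.card]; exact hdeg
  letI := Classical.decEq (F →ₐ[ℚ] ℂ)
  have huniv : (Finset.univ : Finset (F →ₐ[ℚ] ℂ)) = {τ₁, τ₂} := by
    symm
    apply Finset.eq_univ_of_card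
    rw [Finset.card_insert_of_notMem (by simpa using hτ), Finset.card_singleton, hcard]
  have := trace_eq_sum_embeddings (K := ℚ) (L := F) ℂ (x := x)
  rw [huniv, Finset.sum_pair hτ] at this
  have hτ₁ : τ₁ x = c (σ₁ x) := rfl
  have hτ₂ : τ₂ x = c (σ₂ x) := rfl
  have : (((Algebra.trace ℚ F x : ℚ) : ℝ) : ℂ) = ((σ₁ x + σ₂ x : ℝ) : ℂ) := by
    rw [Complex.ofReal_add]
    rw [hτ₁, hτ₂] at this
    simpa [c, Complex.ofReal_ratCast] using this
  exact_mod_cast this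


lemma eq_rat_of_conj {F : Type*} [Field F] [NumberField F]
    (σ₁ σ₂ : F →+* ℝ) (x : F)
    (htr : ((Algebra.trace ℚ F x : ℚ) : ℝ) = σ₁ x + σ₂ x)
    (hx : σ₁ x = σ₂ x) :
    ∃ q : ℚ, x = (q : F) := by
  set t : ℚ := Algebra.trace ℚ F x with ht
  refine ⟨t / 2, ?_⟩
  have h1 : σ₁ (x - ((t / 2 : ℚ) : F)) = 0 := by
    rw [map_sub, map_ratCast]
    rw [← hx] at htr
    push_cast
    linarith
  have h2 : x - ((t / 2 : ℚ) : F) = 0 := by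
    by_contra h
    exact h ((map_eq_zero σ₁).mp h1)
  have := sub_eq_zero.mp h2
  exact this


lemma zsmul_mem_fi {F : Type*} [Field F] [NumberField F]
    {I : FractionalIdeal (𝓞 F)⁰ F} {x : F} (hx : x ∈ I) (n : ℤ) : (n : F) * x ∈ I := by
  rw [← FractionalIdeal.mem_coe] at hx ⊢
  simpa [zsmul_eq_mul] using Submodule.toAddSubgroup _ |>.zsmul_mem hx n

lemma no_small_rat {F : Type*} [Field F] [NumberField F]
    (I : FractionalIdeal (𝓞 F)⁰ F) (hprim : primitiveOne F I)
    (q : ℚ) (hq : (q : F) ∈ I) (hq0 : q ≠ 0) (hq1 : |q| < 1) : False := by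
  have hden : 2 ≤ q.den := by
    by_contra h
    push_neg at h
    interval_cases hd : q.den
    · exact q.den_nz (by omega)
    · have : (q.num : ℚ) = q := by
        rw [← Rat.num_div_den q, hd]; simp
      have hnum : q.num ≠ 0 := Rat.num_ne_zero.mpr hq0
      have : (1:ℚ) ≤ |q| := by
        rw [← this, ← Int.cast_abs]
        exact_mod_cast Int.one_le_abs (by exact_mod_cast hnum)
      linarith
  have hcop : IsCoprime (q.num) (q.den : ℤ) := by
    rw [Int.isCoprime_iff_gcd_eq_one]
    simpa [Int.gcd] using q.reduced
  obtain ⟨u, v, huv⟩ := hcop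
  have hmem : (u : F) * (q : F) + (v : F) * 1 ∈ I := by
    rw [← FractionalIdeal.mem_coe]
    exact Submodule.toAddSubgroup _ |>.add_mem
      (Submodule.mem_toAddSubgroup _ |>.mpr (FractionalIdeal.mem_coe.mpr (zsmul_mem_fi hq u)))
      (Submodule.mem_toAddSubgroup _ |>.mpr (FractionalIdeal.mem_coe.mpr (zsmul_mem_fi hprim.1 v)))
  have hval : (u : F) * (q : F) + (v : F) * 1 = ((1 / (q.den : ℚ) : ℚ) : F) := by
    have : (u * q + v : ℚ) = 1 / (q.den : ℚ) := by
      have hden0 : ((q.den : ℚ)) ≠ 0 := by exact_mod_cast q.den_nz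
      have hq' : (q.num : ℚ) / (q.den : ℚ) = q := Rat.num_div_den q
      have h1 : (u : ℚ) * q.num + v * q.den = 1 := by exact_mod_cast huv
      rw [eq_div_iff hden0]
      have hqd : q * (q.den : ℚ) = (q.num : ℚ) := by
        have h2 := div_mul_cancel₀ (q.num : ℚ) hden0
        rwa [hq'] at h2
      calc ((u:ℚ) * q + v) * q.den = u * (q * q.den) + v * q.den := by ring
      _ = 1 := by rw [hqd]; exact h1
    calc (u : F) * (q : F) + (v : F) * 1 = ((u * q + v : ℚ) : F) := by push_cast; ring
    _ = _ := by rw [this]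
  rw [hval] at hmem
  refine hprim.2 (q.den : ℤ) (by exact_mod_cast hden) ?_
  have : ((1 / (q.den : ℚ) : ℚ) : F) = (1:F) / ((q.den : ℤ) : F) := by push_cast; ring
  rwa [← this]


lemma covol_le {F : Type*} [Field F] [NumberField F]
    (hdeg : Module.finrank ℚ F = 2)
    (σ₁ σ₂ : F →+* ℝ)
    (htr : ∀ x : F, ((Algebra.trace ℚ F x : ℚ) : ℝ) = σ₁ x + σ₂ x)
    (I : FractionalIdeal (𝓞 F)⁰ F) (f : F)
    (hf : f ∈ I) (h1 : (1 : F) ∈ I) (hne : σ₁ f ≠ σ₂ f) :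
    Real.sqrt ((NumberField.discr F : ℤ) : ℝ) * (FractionalIdeal.absNorm I : ℝ)
      ≤ |σ₁ f - σ₂ f| := by
  classical
  have hI0 : I ≠ 0 := by
    intro h
    rw [h] at h1
    simp at h1
  set Iu : (FractionalIdeal (𝓞 F)⁰ F)ˣ := Units.mk0 I hI0 with hIu
  have hcardι : Fintype.card (Free.ChooseBasisIndex ℤ Iu) = 2 := by
    rw [← Module.finrank_eq_card_chooseBasisIndex, fractionalIdeal_rank,
      RingOfIntegers.rank, hdeg]
  have hcardκ : Fintype.card (Free.ChooseBasisIndex ℤ (𝓞 F)) = 2 := by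
    rw [← Module.finrank_eq_card_chooseBasisIndex, RingOfIntegers.rank, hdeg]
  have e : Free.ChooseBasisIndex ℤ (𝓞 F) ≃ Free.ChooseBasisIndex ℤ Iu :=
    Fintype.equivOfCardEq (by rw [hcardι, hcardκ])
  set B' : Basis (Free.ChooseBasisIndex ℤ (𝓞 F)) ℚ F :=
    (basisOfFractionalIdeal F Iu).reindex e.symm with hB'
  set d : ℚ := (integralBasis F).det ⇑B' with hd
  have hNorm : |d| = FractionalIdeal.absNorm I := by
    rw [hd, hB']
    exact det_basisOfFractionalIdeal_eq_absNorm F Iu e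
  -- discriminant base change
  have hdiscr : Algebra.discr ℚ ⇑B' = d ^ 2 * Algebra.discr ℚ ⇑(integralBasis F) := by
    have hvm : ⇑(integralBasis F) ᵥ* (((integralBasis F).toMatrix ⇑B').map
        (algebraMap ℚ F)) = ⇑B' := Basis.toMatrix_map_vecMul _ _
    have := Algebra.discr_of_matrix_vecMul (⇑(integralBasis F))
      ((integralBasis F).toMatrix ⇑B')
    rw [hvm] at this
    rw [this, hd, Basis.det_apply]
  -- pass to Fin 2
  have e2 : Free.ChooseBasisIndex ℤ (𝓞 F) ≃ Fin 2 := Fintype.equivFinOfCardEq hcardκ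
  set c2 : Basis (Fin 2) ℚ F := B'.reindex e2 with hc2
  have hdiscr2 : Algebra.discr ℚ ⇑c2 = Algebra.discr ℚ ⇑B' := by
    rw [hc2, Basis.coe_reindex]
    exact Algebra.discr_reindex ℚ B' e2
  -- real embedding matrix
  set M : Matrix (Fin 2) (Fin 2) ℝ := Matrix.of fun i j => ![σ₁, σ₂] j (c2 i) with hM
  have hTM : (Algebra.traceMatrix ℚ ⇑c2).map (Rat.cast : ℚ → ℝ) = M * Mᵀ := by
    ext i j
    rw [Matrix.map_apply, Matrix.mul_apply]
    rw [Algebra.traceMatrix_apply, Algebra.traceForm_apply]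
    rw [htr (c2 i * c2 j)]
    simp [Fin.sum_univ_two, hM, Matrix.transpose_apply]
  have hdet2 : ((Algebra.discr ℚ ⇑c2 : ℚ) : ℝ) = M.det ^ 2 := by
    have : ((Algebra.discr ℚ ⇑c2 : ℚ) : ℝ)
        = ((Algebra.traceMatrix ℚ ⇑c2).map (Rat.cast : ℚ → ℝ)).det := by
      rw [Algebra.discr_def]
      rw [show ((Rat.cast : ℚ → ℝ)) = ⇑(Rat.castHom ℝ) from rfl, ← RingHom.mapMatrix_apply,
        ← RingHom.map_det]
    rw [this, hTM, Matrix.det_mul, Matrix.det_transpose, pow_two]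
  -- discr F
  have hcoe : ((NumberField.discr F : ℤ) : ℚ) = Algebra.discr ℚ ⇑(integralBasis F) := by
    exact_mod_cast NumberField.coe_discr F
  have hkey : ((NumberField.discr F : ℤ) : ℝ) * (d : ℝ) ^ 2 = M.det ^ 2 := by
    have := hdiscr2.trans hdiscr
    have hQ : (Algebra.discr ℚ ⇑c2 : ℚ) = d ^ 2 * ((NumberField.discr F : ℤ) : ℚ) := by
      rw [this, hcoe]
    calc ((NumberField.discr F : ℤ) : ℝ) * (d : ℝ) ^ 2
        = (((d ^ 2 * ((NumberField.discr F : ℤ) : ℚ)) : ℚ) : ℝ) := by push_cast; ring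
      _ = ((Algebra.discr ℚ ⇑c2 : ℚ) : ℝ) := by rw [← hQ]
      _ = M.det ^ 2 := hdet2
  have hN0 : FractionalIdeal.absNorm I ≠ 0 := by
    rw [ne_eq, FractionalIdeal.absNorm_eq_zero_iff]
    exact hI0
  have hd0 : (d : ℝ) ≠ 0 := by
    intro h
    apply hN0
    rw [← hNorm]
    simpa using h
  have hdiscr_nonneg : (0:ℝ) ≤ ((NumberField.discr F : ℤ) : ℝ) := by
    nlinarith [sq_nonneg M.det, hkey, (by positivity : (0:ℝ) < (d:ℝ)^2)]
  have hcov : Real.sqrt ((NumberField.discr F : ℤ) : ℝ) * (FractionalIdeal.absNorm I : ℝ)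
      = |M.det| := by
    have h1' : (FractionalIdeal.absNorm I : ℝ) = |(d:ℝ)| := by
      rw [← hNorm]; push_cast; ring
    rw [h1', ← Real.sqrt_sq_eq_abs (d:ℝ), ← Real.sqrt_mul hdiscr_nonneg, hkey,
      Real.sqrt_sq_eq_abs]
  rw [hcov]
  -- sublattice estimate
  have hspan : ∀ x : F, x ∈ I → ∃ n : Fin 2 → ℤ, ∑ i, n i • c2 i = x := by
    intro x hx
    have hx' : x ∈ Submodule.span ℤ (Set.range ⇑(basisOfFractionalIdeal F Iu)) := by
      rw [mem_span_basisOfFractionalIdeal]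
      exact hx
    have hrange : Set.range ⇑c2 = Set.range ⇑(basisOfFractionalIdeal F Iu) := by
      rw [hc2, Basis.range_reindex, hB', Basis.range_reindex]
    rw [← hrange] at hx'
    exact (Submodule.mem_span_range_iff_exists_fun ℤ).mp hx'
  obtain ⟨n, hn⟩ := hspan f hf
  obtain ⟨m, hm⟩ := hspan 1 h1
  set A : Matrix (Fin 2) (Fin 2) ℝ :=
    Matrix.of ![(fun i => (n i : ℝ)), (fun i => (m i : ℝ))] with hA
  have hσsum : ∀ (σ : F →+* ℝ) (x : F) (c : Fin 2 → ℤ), (∑ i, c i • c2 i = x) →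
      σ x = ∑ i, (c i : ℝ) * σ (c2 i) := by
    intro σ x c hcx
    rw [← hcx, map_sum]
    congr 1
    ext i
    rw [zsmul_eq_mul, _root_.map_mul, map_intCast]
  have k1 : (n 0 : ℝ) * σ₁ (c2 0) + (n 1 : ℝ) * σ₁ (c2 1) = σ₁ f := by
    rw [hσsum σ₁ f n hn, Fin.sum_univ_two]
  have k2 : (n 0 : ℝ) * σ₂ (c2 0) + (n 1 : ℝ) * σ₂ (c2 1) = σ₂ f := by
    rw [hσsum σ₂ f n hn, Fin.sum_univ_two]
  have k3 : (m 0 : ℝ) * σ₁ (c2 0) + (m 1 : ℝ) * σ₁ (c2 1) = 1 := by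
    rw [show (1:ℝ) = σ₁ 1 from (map_one σ₁).symm, hσsum σ₁ 1 m hm, Fin.sum_univ_two]
  have k4 : (m 0 : ℝ) * σ₂ (c2 0) + (m 1 : ℝ) * σ₂ (c2 1) = 1 := by
    rw [show (1:ℝ) = σ₂ 1 from (map_one σ₂).symm, hσsum σ₂ 1 m hm, Fin.sum_univ_two]
  have hAM : A * M = Matrix.of ![![σ₁ f, σ₂ f], ![(1:ℝ), (1:ℝ)]] := by
    ext i j
    rw [Matrix.mul_apply]
    fin_cases i <;> fin_cases j <;>
      simp [hA, hM, Fin.sum_univ_two, k1, k2, k3, k4]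
  have hdetAM : A.det * M.det = σ₁ f - σ₂ f := by
    rw [← Matrix.det_mul, hAM, Matrix.det_fin_two]
    simp
  have hAdet : A.det = ((n 0 * m 1 - n 1 * m 0 : ℤ) : ℝ) := by
    rw [Matrix.det_fin_two]
    simp [hA]
  have hAne : (n 0 * m 1 - n 1 * m 0 : ℤ) ≠ 0 := by
    intro h
    apply hne
    have hz : A.det = 0 := by rw [hAdet, h]; simp
    have h2 := hdetAM
    rw [hz, zero_mul] at h2
    linarith [h2]
  have hA1 : (1:ℝ) ≤ |A.det| := by
    rw [hAdet, ← Int.cast_abs]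
    exact_mod_cast Int.one_le_abs hAne
  calc |M.det| = 1 * |M.det| := by ring
    _ ≤ |A.det| * |M.det| := by
        apply mul_le_mul_of_nonneg_right hA1 (abs_nonneg _)
    _ = |A.det * M.det| := (abs_mul _ _).symm
    _ = |σ₁ f - σ₂ f| := by rw [hdetAM]


lemma sqrt_lt_one_iff' {x : ℝ} (hx : 0 ≤ x) : Real.sqrt x < 1 ↔ x < 1 := by
  rw [show (1:ℝ) = Real.sqrt 1 by simp, Real.sqrt_lt_sqrt_iff hx, Real.sqrt_one]

lemma ball_volume_pi : volume {x : Fin 2 → ℝ | x 0 ^ 2 + x 1 ^ 2 < 1}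
    = ENNReal.ofReal Real.pi := by
  have hme : MeasurePreserving (MeasurableEquiv.toLp 2 (Fin 2 → ℝ)) volume volume :=
    (EuclideanSpace.volume_preserving_symm_measurableEquiv_toLp (Fin 2)).symm
  have hset : (MeasurableEquiv.toLp 2 (Fin 2 → ℝ)) ⁻¹'
      (Metric.ball (0 : EuclideanSpace ℝ (Fin 2)) 1)
      = {x : Fin 2 → ℝ | x 0 ^ 2 + x 1 ^ 2 < 1} := by
    ext x
    simp only [Set.mem_preimage, Metric.mem_ball, dist_zero_right, Set.mem_setOf_eq]
    rw [EuclideanSpace.norm_eq]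
    rw [show ∑ i, ‖(MeasurableEquiv.toLp 2 (Fin 2 → ℝ)) x i‖ ^ 2
        = x 0 ^ 2 + x 1 ^ 2 by
      rw [Fin.sum_univ_two]
      show ‖x 0‖ ^ 2 + ‖x 1‖ ^ 2 = _
      simp [sq_abs]]
    exact sqrt_lt_one_iff' (by positivity)
  rw [← hset, hme.measure_preimage measurableSet_ball.nullMeasurableSet,
    EuclideanSpace.volume_ball]
  norm_num
  rw [← ENNReal.ofReal_pow (Real.sqrt_nonneg _), Real.sq_sqrt Real.pi_nonneg]

lemma minkowski_pair (v w : Fin 2 → ℝ) (hdet : v 0 * w 1 - v 1 * w 0 ≠ 0)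
    (a₁ a₂ : ℝ) (ha₁ : 0 < a₁) (ha₂ : 0 < a₂)
    (hfree : ∀ p q : ℤ, ¬(p = 0 ∧ q = 0) →
      1 ≤ ((p : ℝ) * v 0 + (q : ℝ) * w 0) ^ 2 / a₁ ^ 2
        + ((p : ℝ) * v 1 + (q : ℝ) * w 1) ^ 2 / a₂ ^ 2) :
    Real.pi * a₁ * a₂ ≤ 4 * |v 0 * w 1 - v 1 * w 0| := by
  classical
  by_contra hcon
  push_neg at hcon
  -- basis of ℝ² from v, w
  have hli : LinearIndependent ℝ ![v, w] := by
    have hu : IsUnit (Matrix.of ![v, w]) := by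
      rw [Matrix.isUnit_iff_isUnit_det, Matrix.det_fin_two]
      simpa using isUnit_iff_ne_zero.mpr hdet
    exact Matrix.linearIndependent_rows_iff_isUnit.mpr hu
  set b : Basis (Fin 2) ℝ (Fin 2 → ℝ) :=
    basisOfLinearIndependentOfCardEqFinrank hli (by simp) with hb
  have hbcoe : ⇑b = ![v, w] := coe_basisOfLinearIndependentOfCardEqFinrank hli _
  have hvol_fd : volume (ZSpan.fundamentalDomain b)
      = ENNReal.ofReal |v 0 * w 1 - v 1 * w 0| := by
    rw [ZSpan.volume_fundamentalDomain]
    congr 1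
    rw [hbcoe, Matrix.det_fin_two]
    simp
  -- the ellipse
  set T : (Fin 2 → ℝ) →ₗ[ℝ] (Fin 2 → ℝ) := Matrix.toLin' (Matrix.diagonal ![a₁, a₂]) with hT
  set B : Set (Fin 2 → ℝ) := {x | x 0 ^ 2 + x 1 ^ 2 < 1} with hB
  set sE : Set (Fin 2 → ℝ) := {x | x 0 ^ 2 / a₁ ^ 2 + x 1 ^ 2 / a₂ ^ 2 < 1} with hsE
  have hTB : T '' B = sE := by
    ext x
    constructor
    · rintro ⟨y, hy, rfl⟩
      have h0 : T y 0 = a₁ * y 0 := by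
        rw [hT]; simp [Matrix.toLin'_apply, Matrix.mulVec_diagonal]
      have h1 : T y 1 = a₂ * y 1 := by
        rw [hT]; simp [Matrix.toLin'_apply, Matrix.mulVec_diagonal]
      rw [hsE, Set.mem_setOf_eq, h0, h1]
      have : (a₁ * y 0) ^ 2 / a₁ ^ 2 = y 0 ^ 2 := by field_simp
      have h2 : (a₂ * y 1) ^ 2 / a₂ ^ 2 = y 1 ^ 2 := by field_simp
      rw [this, h2]
      exact hy
    · intro hx
      refine ⟨fun i => x i / ![a₁, a₂] i, ?_, ?_⟩
      · rw [hB, Set.mem_setOf_eq]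
        simp only [Matrix.cons_val_zero, Matrix.cons_val_one, Matrix.head_cons, div_pow]
        exact hx
      · funext i
        rw [hT]
        simp only [Matrix.toLin'_apply, Matrix.mulVec_diagonal]
        fin_cases i <;> simp <;> field_simp
  have hconv : Convex ℝ sE := by
    rw [← hTB]
    apply Convex.linear_image _ T
    rw [hB]
    have : B = ⇑(EuclideanSpace.equiv (Fin 2) ℝ) '' (Metric.ball 0 1) := by
      ext x
      constructor
      · intro hx
        refine ⟨(EuclideanSpace.equiv (Fin 2) ℝ).symm x, ?_, (EuclideanSpace.equiv (Fin 2) ℝ).apply_symm_apply x⟩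
        rw [Metric.mem_ball, dist_zero_right, EuclideanSpace.norm_eq]
        rw [show ∑ i, ‖(EuclideanSpace.equiv (Fin 2) ℝ).symm x i‖ ^ 2 = x 0 ^ 2 + x 1 ^ 2 by
          rw [Fin.sum_univ_two]; simp [sq_abs]]
        exact (sqrt_lt_one_iff' (by positivity)).mpr hx
      · rintro ⟨y, hy, rfl⟩
        rw [Metric.mem_ball, dist_zero_right, EuclideanSpace.norm_eq] at hy
        rw [show ∑ i, ‖y i‖ ^ 2 = y 0 ^ 2 + y 1 ^ 2 by rw [Fin.sum_univ_two]; simp [sq_abs]] at hy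
        have := (sqrt_lt_one_iff' (by positivity)).mp hy
        simpa [hB] using this
    rw [hB] at this
    rw [this]
    exact (convex_ball _ _).linear_image (EuclideanSpace.equiv (Fin 2) ℝ).toLinearMap
  have hsymm : ∀ x ∈ sE, -x ∈ sE := by
    intro x hx
    rw [hsE, Set.mem_setOf_eq] at hx ⊢
    simpa using hx
  have hvolB : volume B = ENNReal.ofReal Real.pi := ball_volume_pi
  have hvolsE : volume sE = ENNReal.ofReal (a₁ * a₂ * Real.pi) := by
    rw [← hTB, hT, Measure.addHaar_image_linearMap, LinearMap.det_toLin', Matrix.det_diagonal,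
      Fin.prod_univ_two, hvolB]
    rw [← ENNReal.ofReal_mul (by positivity)]
    congr 1
    rw [abs_of_pos (by positivity : (0:ℝ) < ![a₁,a₂] 0 * ![a₁,a₂] 1)]
    simp
  -- apply Minkowski
  have hfin : finrank ℝ (Fin 2 → ℝ) = 2 := by simp
  have hlt : volume (ZSpan.fundamentalDomain b) * 2 ^ finrank ℝ (Fin 2 → ℝ) < volume sE := by
    rw [hvol_fd, hvolsE, hfin]
    rw [show ((2:ℝ≥0∞))^2 = ENNReal.ofReal 4 by norm_num]
    rw [← ENNReal.ofReal_mul (abs_nonneg _)]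
    exact (ENNReal.ofReal_lt_ofReal_iff (by positivity)).mpr (by nlinarith)
  haveI : Countable ↥(Submodule.span ℤ (Set.range ⇑b)).toAddSubgroup :=
    inferInstanceAs (Countable ↥(Submodule.span ℤ (Set.range ⇑b)))
  obtain ⟨x, hx0, hxs⟩ := exists_ne_zero_mem_lattice_of_measure_mul_two_pow_lt_measure
    (ZSpan.isAddFundamentalDomain' b volume) hsymm hconv hlt
  -- decompose x
  have hxmem : ((x : _) : Fin 2 → ℝ) ∈ Submodule.span ℤ (Set.range ⇑b) :=
    (Submodule.mem_toAddSubgroup _).mp x.2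
  obtain ⟨c, hc⟩ := (Submodule.mem_span_range_iff_exists_fun ℤ).mp hxmem
  have hcc : ¬(c 0 = 0 ∧ c 1 = 0) := by
    rintro ⟨h0, h1⟩
    apply hx0
    have : (x : Fin 2 → ℝ) = 0 := by
      rw [← hc, Fin.sum_univ_two, h0, h1]
      simp
    exact (ZeroMemClass.coe_eq_zero).mp this
  have hxi : ∀ i, (x : Fin 2 → ℝ) i = (c 0 : ℝ) * v i + (c 1 : ℝ) * w i := by
    intro i
    rw [← hc, Fin.sum_univ_two]
    simp [hbcoe]
  have h1le := hfree (c 0) (c 1) hcc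
  rw [← hxi 0, ← hxi 1] at h1le
  rw [hsE] at hxs
  have := hxs
  simp only [Set.mem_setOf_eq] at this
  linarith


end Stmt8Aux

open Stmt8Aux

/-- Let `F` be a real quadratic field, `C ≥ 1`, and `I` a fractional ideal satisfying
condition `(⋆)`. Then every `g ∈ G` satisfies `‖g‖ < 8/π` (so `G` is contained in
`{g ∈ I, g ≠ 0 : (g₁² − 1/C²)(g₂² − 1/C²) < 0, ‖g‖ < 8/π}`). Moreover, for any `a₁, a₂ > 0`
with `1/(C²a₁²) + 1/(C²a₂²) = 1` such that the open ellipse `{x : x₁²/a₁² + x₂²/a₂² < 1}`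
contains no nonzero point of `I`, one has `a₁ < 8/π` and `a₂ < 8/π`. -/
theorem stmt_8 (F : Type*) [Field F] [NumberField F]
    (hdeg : Module.finrank ℚ F = 2)
    (σ₁ σ₂ : F →+* ℝ) (hσ : σ₁ ≠ σ₂)
    (C : ℝ) (hC : 1 ≤ C) (I : FractionalIdeal (𝓞 F)⁰ F)
    (hstar : starCond F σ₁ σ₂ C I) :
    (∀ g : F, inG F σ₁ σ₂ C I g →
        g ∈ I ∧ g ≠ 0 ∧ ((σ₁ g) ^ 2 - 1 / C ^ 2) * ((σ₂ g) ^ 2 - 1 / C ^ 2) < 0 ∧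
          qnorm σ₁ σ₂ g < 8 / Real.pi) ∧
    (∀ a₁ a₂ : ℝ, 0 < a₁ → 0 < a₂ →
        1 / (C ^ 2 * a₁ ^ 2) + 1 / (C ^ 2 * a₂ ^ 2) = 1 →
        (∀ g : F, g ∈ I → g ≠ 0 → 1 ≤ (σ₁ g) ^ 2 / a₁ ^ 2 + (σ₂ g) ^ 2 / a₂ ^ 2) →
        a₁ < 8 / Real.pi ∧ a₂ < 8 / Real.pi) := by
  obtain ⟨hprim, hS1, f, hfI, hf0, hshort, hflow, hfup⟩ := hstar
  have hC0 : (0:ℝ) < C := lt_of_lt_of_le one_pos hC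
  have hπ : (0:ℝ) < Real.pi := Real.pi_pos
  have htr : ∀ x : F, ((Algebra.trace ℚ F x : ℚ) : ℝ) = σ₁ x + σ₂ x :=
    traceR hdeg σ₁ σ₂ hσ
  -- the shortest vector has distinct conjugates
  have hfne : σ₁ f ≠ σ₂ f := by
    intro hEq
    obtain ⟨q, hq⟩ := eq_rat_of_conj σ₁ σ₂ f (htr f) hEq
    have hq0 : q ≠ 0 := by
      intro h
      apply hf0
      rw [hq, h]; simp
    have hnorm_lt : qnorm σ₁ σ₂ f < Real.sqrt 2 := by
      have : Real.sqrt 2 / C ≤ Real.sqrt 2 := by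
        apply div_le_self (Real.sqrt_nonneg 2) hC
      linarith
    have hsumlt : (σ₁ f) ^ 2 + (σ₂ f) ^ 2 < 2 := by
      have h1 := hnorm_lt
      rw [qnorm] at h1
      exact (Real.sqrt_lt_sqrt_iff (by positivity)).mp h1
    have hq2 : ((q:ℝ)) ^ 2 < 1 := by
      have h1 : σ₁ f = (q : ℝ) := by rw [hq]; exact map_ratCast σ₁ q
      have h2 : σ₂ f = (q : ℝ) := by rw [hq]; exact map_ratCast σ₂ q
      rw [h1, h2] at hsumlt
      nlinarith
    have hqabs : |q| < 1 := by
      have : |(q:ℝ)| < 1 := by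
        nlinarith [sq_abs (q:ℝ), abs_nonneg (q:ℝ)]
      rw [← Rat.cast_abs] at this
      exact_mod_cast this
    exact no_small_rat I hprim q (by rw [← hq]; exact hfI) hq0 hqabs
  have hfd_pos : 0 < |σ₁ f - σ₂ f| := abs_pos.mpr (sub_ne_zero.mpr hfne)
  have hfd_lt : |σ₁ f - σ₂ f| < 2 / C := by
    have hsq : (σ₁ f) ^ 2 + (σ₂ f) ^ 2 < 2 / C ^ 2 := by
      have h1 := hfup
      rw [qnorm] at h1
      have h2 : Real.sqrt ((σ₁ f) ^ 2 + (σ₂ f) ^ 2) < Real.sqrt (2 / C ^ 2) := by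
        rw [show Real.sqrt (2 / C ^ 2) = Real.sqrt 2 / C by
          rw [Real.sqrt_div (by norm_num : (0:ℝ) ≤ 2)]
          congr 1
          rw [Real.sqrt_sq hC0.le]]
        exact h1
      exact (Real.sqrt_lt_sqrt_iff (by positivity)).mp h2
    have h4 : (σ₁ f - σ₂ f) ^ 2 < (2 / C) ^ 2 := by
      have : (2 / C) ^ 2 = 4 / C ^ 2 := by ring
      rw [this]
      nlinarith [sq_nonneg (σ₁ f + σ₂ f), (by ring : (4:ℝ) / C ^ 2 = 2 * (2 / C ^ 2))]
    rw [← Real.sqrt_sq_eq_abs]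
    exact (Real.sqrt_lt' (by positivity)).mpr h4
  have hcovol : qcovol F I ≤ |σ₁ f - σ₂ f| := by
    rw [qcovol]
    exact_mod_cast covol_le hdeg σ₁ σ₂ htr I f hfI hprim.1 hfne
  constructor
  · rintro g ⟨hgI, hg0, hgprod, hglt⟩
    refine ⟨hgI, hg0, hgprod, ?_⟩
    have h1 : (4 / Real.pi) * C * qcovol F I ≤ (4 / Real.pi) * C * |σ₁ f - σ₂ f| := by
      apply mul_le_mul_of_nonneg_left hcovol (by positivity)
    have h2 : (4 / Real.pi) * C * |σ₁ f - σ₂ f| < (4 / Real.pi) * C * (2 / C) := by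
      apply mul_lt_mul_of_pos_left hfd_lt (by positivity)
    have h3 : (4 / Real.pi) * C * (2 / C) = 8 / Real.pi := by
      field_simp
      ring
    linarith [hglt]
  · intro a₁ a₂ ha₁ ha₂ hsum hellipse
    have hmink : Real.pi * a₁ * a₂ ≤ 4 * |σ₁ f - σ₂ f| := by
      have := minkowski_pair ![σ₁ f, σ₂ f] ![(1:ℝ), 1] (by simpa using sub_ne_zero.mpr hfne)
        a₁ a₂ ha₁ ha₂ ?_
      · simpa using this
      · intro p q hpq
        simp only [Matrix.cons_val_zero, Matrix.cons_val_one, Matrix.head_cons]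
        set g : F := (p : F) * f + (q : F) * 1 with hg
        have hgI : g ∈ I := by
          rw [hg, ← FractionalIdeal.mem_coe]
          exact Submodule.toAddSubgroup _ |>.add_mem
            (Submodule.mem_toAddSubgroup _ |>.mpr (FractionalIdeal.mem_coe.mpr (zsmul_mem_fi hfI p)))
            (Submodule.mem_toAddSubgroup _ |>.mpr (FractionalIdeal.mem_coe.mpr (zsmul_mem_fi hprim.1 q)))
        have hσ₁g : σ₁ g = (p : ℝ) * σ₁ f + (q : ℝ) := by
          rw [hg]; push_cast [map_add, _root_.map_mul, map_intCast, map_one]; ring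
        have hσ₂g : σ₂ g = (p : ℝ) * σ₂ f + (q : ℝ) := by
          rw [hg]; push_cast [map_add, _root_.map_mul, map_intCast, map_one]; ring
        have hgne : g ≠ 0 := by
          intro h0
          have e1 : (p : ℝ) * σ₁ f + (q : ℝ) = 0 := by rw [← hσ₁g, h0, map_zero]
          have e2 : (p : ℝ) * σ₂ f + (q : ℝ) = 0 := by rw [← hσ₂g, h0, map_zero]
          rcases eq_or_ne p 0 with hp | hp
          · apply hpq
            refine ⟨hp, ?_⟩
            rw [hp] at e1
            simp at e1
            exact_mod_cast e1
          · apply hfne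
            have hpR : (p : ℝ) ≠ 0 := Int.cast_ne_zero.mpr hp
            have : (p:ℝ) * (σ₁ f - σ₂ f) = 0 := by linarith
            rcases mul_eq_zero.mp this with h | h
            · exact absurd h hpR
            · linarith [sub_eq_zero.mp h]
        have hh := hellipse g hgI hgne
        rw [hσ₁g, hσ₂g] at hh
        simpa using hh
    have h8 : Real.pi * a₁ * a₂ < 8 / C := by
      have : 4 * |σ₁ f - σ₂ f| < 4 * (2 / C) := by linarith
      have h42 : 4 * (2 / C) = 8 / C := by ring
      linarith
    have hCa1 : 1 < C * a₁ := by
      have hpos2 : 0 < 1 / (C ^ 2 * a₂ ^ 2) := by positivity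
      have h1 : 1 / (C ^ 2 * a₁ ^ 2) < 1 := by linarith
      have hX : (0:ℝ) < C ^ 2 * a₁ ^ 2 := by positivity
      have h2 : 1 < C ^ 2 * a₁ ^ 2 := by
        rw [div_lt_one hX] at h1
        exact h1
      nlinarith [mul_pos hC0 ha₁]
    have hCa2 : 1 < C * a₂ := by
      have hpos1 : 0 < 1 / (C ^ 2 * a₁ ^ 2) := by positivity
      have h1 : 1 / (C ^ 2 * a₂ ^ 2) < 1 := by linarith
      have hX : (0:ℝ) < C ^ 2 * a₂ ^ 2 := by positivity
      have h2 : 1 < C ^ 2 * a₂ ^ 2 := by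
        rw [div_lt_one hX] at h1
        exact h1
      nlinarith [mul_pos hC0 ha₂]
    have h9 : Real.pi * a₁ * a₂ * C < 8 := by
      have := mul_lt_mul_of_pos_right h8 hC0
      rwa [div_mul_cancel₀ _ (ne_of_gt hC0)] at this
    constructor
    · rw [lt_div_iff₀ hπ]
      nlinarith [h9, mul_pos (mul_pos hπ ha₁) ha₂,
        mul_pos (mul_pos hπ ha₁) (sub_pos.mpr hCa2)]
    · rw [lt_div_iff₀ hπ]
      nlinarith [h9, mul_pos (mul_pos hπ ha₁) ha₂,
        mul_pos (mul_pos hπ ha₂) (sub_pos.mpr hCa1)]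
end
end

section
/- Let F be a real quadratic field, C ≥ 1, and let I be a fractional ideal of F satisfying condition (⋆). Suppose α > 0 is such that the metric u = (α⁻¹, α) satisfies ‖1‖_u ≤ C·‖g‖_u for all nonzero g ∈ I. Then ‖u‖ = √(α⁻² + α²) ≤ 2√C, and consequently 1/(2√C) < α < 2√C. -/
open NumberField
open scoped nonZeroDivisors

noncomputable section

open MeasureTheory Submodule in
lemma minkowski_box (f₁ f₂ : ℝ) (hne : f₁ ≠ f₂) (r₀ r₁ : ℝ) (hr₀ : 0 < r₀) (hr₁ : 0 < r₁)
    (hbig : |f₂ - f₁| < r₀ * r₁) :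
    ∃ m n : ℤ, ¬(m = 0 ∧ n = 0) ∧ |(m : ℝ) + n * f₁| ≤ r₀ ∧ |(m : ℝ) + n * f₂| ≤ r₁ := by
  classical
  set M : Matrix (Fin 2) (Fin 2) ℝ := !![1, 1; f₁, f₂] with hM
  have hdet : M.det = f₂ - f₁ := by
    simp [hM, Matrix.det_fin_two]
  have hu : IsUnit M := by
    rw [Matrix.isUnit_iff_isUnit_det, isUnit_iff_ne_zero, hdet]
    exact sub_ne_zero.mpr (Ne.symm hne)
  have li : LinearIndependent ℝ (fun i => M i) :=
    Matrix.linearIndependent_rows_iff_isUnit.mpr hu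
  have hcard : Fintype.card (Fin 2) = Module.finrank ℝ (Fin 2 → ℝ) := by
    simp
  set b : Module.Basis (Fin 2) ℝ (Fin 2 → ℝ) := basisOfLinearIndependentOfCardEqFinrank li hcard with hbdef
  have hb : ⇑b = fun i => M i := coe_basisOfLinearIndependentOfCardEqFinrank li hcard
  haveI : Countable (span ℤ (Set.range ⇑b)).toAddSubgroup :=
    inferInstanceAs (Countable (span ℤ (Set.range ⇑b)))
  have fund := ZSpan.isAddFundamentalDomain' b (volume : Measure (Fin 2 → ℝ))
  set R : Fin 2 → ℝ := ![r₀, r₁] with hR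
  set s : Set (Fin 2 → ℝ) := Set.pi Set.univ fun i => Set.Icc (-(R i)) (R i) with hs
  have h_symm : ∀ x ∈ s, -x ∈ s := by
    intro x hx
    rw [hs, Set.mem_pi] at hx ⊢
    intro i hi
    have := hx i hi
    simp only [Set.mem_Icc, Pi.neg_apply] at this ⊢
    constructor <;> linarith [this.1, this.2]
  have h_conv : Convex ℝ s := convex_pi fun i _ => convex_Icc _ _
  have hvols : volume s = ENNReal.ofReal (2 * r₀) * ENNReal.ofReal (2 * r₁) := by
    rw [hs, volume_pi_pi]
    rw [Fin.prod_univ_two]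
    simp [Real.volume_Icc, hR, two_mul]
  have hmain : volume (ZSpan.fundamentalDomain b) * 2 ^ Module.finrank ℝ (Fin 2 → ℝ) < volume s := by
    rw [ZSpan.volume_fundamentalDomain, hvols]
    have hdb : (Matrix.of ⇑b).det = f₂ - f₁ := by rw [hb]; exact hdet
    rw [hdb]
    have h1 : Module.finrank ℝ (Fin 2 → ℝ) = 2 := by simp
    rw [h1, ← ENNReal.ofReal_mul (by linarith : (0:ℝ) ≤ 2 * r₀)]
    calc ENNReal.ofReal |f₂ - f₁| * 2 ^ 2 = ENNReal.ofReal (|f₂ - f₁| * 4) := by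
          rw [ENNReal.ofReal_mul (abs_nonneg _)]
          norm_num
      _ < ENNReal.ofReal (2 * r₀ * (2 * r₁)) := by
          rw [ENNReal.ofReal_lt_ofReal_iff (by positivity)]
          nlinarith
  obtain ⟨x, hx0, hxs⟩ :=
    exists_ne_zero_mem_lattice_of_measure_mul_two_pow_lt_measure fund h_symm h_conv hmain
  have hxmem : (x : Fin 2 → ℝ) ∈ span ℤ (Set.range ⇑b) := x.2
  obtain ⟨c, hc⟩ := (mem_span_range_iff_exists_fun ℤ).mp hxmem
  have hxval : ∀ j, (x : Fin 2 → ℝ) j = (c 0 : ℝ) * M 0 j + (c 1 : ℝ) * M 1 j := by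
    intro j
    rw [← hc]
    simp [Fin.sum_univ_two, hb]
  refine ⟨c 0, c 1, ?_, ?_, ?_⟩
  · rintro ⟨h0, h1⟩
    apply hx0
    have : (x : Fin 2 → ℝ) = 0 := by
      funext j
      rw [hxval j, h0, h1]
      simp
    exact Subtype.ext this
  · have := hxs 0 (Set.mem_univ 0)
    rw [Set.mem_Icc] at this
    have h2 := hxval 0
    simp [hM, hR] at h2 this
    rw [abs_le]
    constructor <;> [linarith [this.1, h2]; linarith [this.2, h2]]
  · have := hxs 1 (Set.mem_univ 1)
    rw [Set.mem_Icc] at this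
    have h2 := hxval 1
    simp [hM, hR] at h2 this
    rw [abs_le]
    constructor <;> [linarith [this.1, h2]; linarith [this.2, h2]]


set_option maxHeartbeats 1000000 in
/-- Let `F` be a real quadratic field, `C ≥ 1`, and `I` a fractional ideal satisfying
condition `(⋆)`. If `α > 0` is such that the metric `u = (α⁻¹, α)` satisfies
`‖1‖_u ≤ C·‖g‖_u` for all nonzero `g ∈ I`, then `‖u‖ = √(α⁻² + α²) ≤ 2√C`, and consequently
`1/(2√C) < α < 2√C`. -/
theorem stmt_9 (F : Type*) [Field F] [NumberField F]
    (hdeg : Module.finrank ℚ F = 2)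
    (σ₁ σ₂ : F →+* ℝ) (hσ : σ₁ ≠ σ₂)
    (C : ℝ) (hC : 1 ≤ C) (I : FractionalIdeal (𝓞 F)⁰ F)
    (hstar : starCond F σ₁ σ₂ C I)
    (α : ℝ) (hα : 0 < α)
    (hred : ∀ g : F, g ∈ I → g ≠ 0 →
      qnormu σ₁ σ₂ α⁻¹ α 1 ≤ C * qnormu σ₁ σ₂ α⁻¹ α g) :
    Real.sqrt ((α⁻¹) ^ 2 + α ^ 2) ≤ 2 * Real.sqrt C ∧
    1 / (2 * Real.sqrt C) < α ∧ α < 2 * Real.sqrt C := by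
  obtain ⟨hprim, hS1, f, hfI, hf0, hfmin, hflow, hfup⟩ := hstar
  have hC0 : (0:ℝ) < C := lt_of_lt_of_le one_pos hC
  have hα' : α ≠ 0 := ne_of_gt hα
  set f₁ := σ₁ f with hf₁
  set f₂ := σ₂ f with hf₂
  have hfsq : f₁ ^ 2 + f₂ ^ 2 < 2 / C ^ 2 := by
    have h3 : (0:ℝ) < Real.sqrt 2 / C := by positivity
    have h4 := (Real.sqrt_lt' h3).mp hfup
    calc f₁ ^ 2 + f₂ ^ 2 < (Real.sqrt 2 / C) ^ 2 := h4
      _ = 2 / C ^ 2 := by rw [div_pow, Real.sq_sqrt (by norm_num : (0:ℝ) ≤ 2)]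
  have hf12 : f₁ ≠ f₂ := by
    intro he
    apply hS1 f hfI hf0
    have hfsq' : f₁ ^ 2 + f₁ ^ 2 < 2 / C ^ 2 := by rw [he] at hfsq ⊢; exact hfsq
    have h1 : f₁ ^ 2 ≤ (1 / C) ^ 2 := by
      rw [div_pow, one_pow]
      have h2 : 2 / C ^ 2 = 2 * (1 / C ^ 2) := by ring
      linarith [hfsq', h2.le, h2.ge]
    have h2 : |f₁| ≤ 1 / C := by
      rw [abs_le]
      constructor <;>
        nlinarith [sq_nonneg (f₁ - 1 / C), sq_nonneg (f₁ + 1 / C), one_div_pos.mpr hC0]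
    have h2' : |f₂| ≤ 1 / C := by rw [← he]; exact h2
    exact ⟨h2, h2', hfsq⟩
  have key : (α⁻¹) ^ 2 + α ^ 2 ≤ 4 * C := by
    by_contra hcon
    push_neg at hcon
    have hA0 : (0:ℝ) < (α⁻¹) ^ 2 + α ^ 2 := by positivity
    set D := |f₂ - f₁| with hDdef
    have hD0 : 0 < D := abs_pos.mpr (sub_ne_zero.mpr (Ne.symm hf12))
    have hDC : D < 2 / C := by
      have h1 : D ^ 2 < (2 / C) ^ 2 := by
        rw [sq_abs]
        have : (2 / C) ^ 2 = 2 * (2 / C ^ 2) := by field_simp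
        rw [this]
        nlinarith [sq_nonneg (f₁ + f₂)]
      exact lt_of_pow_lt_pow_left₀ 2 (by positivity) h1
    have hCD2 : D * C < 2 := (lt_div_iff₀ hC0).mp hDC
    have h5 : 2 * C ^ 2 * D < (α⁻¹) ^ 2 + α ^ 2 := by nlinarith
    set t := (2 * C ^ 2 * D + ((α⁻¹) ^ 2 + α ^ 2)) / (4 * C ^ 2) with ht
    have ht0 : 0 < t := by positivity
    have htD : D < t := by
      rw [ht, lt_div_iff₀ (by positivity)]
      nlinarith
    have ht2 : 2 * C ^ 2 * t < (α⁻¹) ^ 2 + α ^ 2 := by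
      have he : 2 * C ^ 2 * t = (2 * C ^ 2 * D + ((α⁻¹) ^ 2 + α ^ 2)) / 2 := by
        rw [ht]; field_simp; ring
      rw [he]
      linarith
    have hst : 0 < Real.sqrt t := Real.sqrt_pos.mpr ht0
    have hrr : (α * Real.sqrt t) * (Real.sqrt t / α) = t := by
      rw [show (α * Real.sqrt t) * (Real.sqrt t / α)
          = (Real.sqrt t * Real.sqrt t) * (α / α) by ring,
        div_self hα', mul_one, Real.mul_self_sqrt ht0.le]
    obtain ⟨m, n, hmn, hm1, hm2⟩ := minkowski_box f₁ f₂ hf12 (α * Real.sqrt t)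
      (Real.sqrt t / α) (by positivity) (by positivity) (by rw [hrr]; exact htD)
    set g : F := (m : F) + (n : F) * f with hg
    have hgI : g ∈ I := by
      rw [← FractionalIdeal.mem_coe] at hfI ⊢
      have h1 : (1 : F) ∈ (I : Submodule (𝓞 F) F) := FractionalIdeal.mem_coe.mpr hprim.1
      have := add_mem (zsmul_mem h1 m) (zsmul_mem hfI n)
      simpa [hg, zsmul_eq_mul] using this
    have hσ1g : σ₁ g = (m : ℝ) + (n : ℝ) * f₁ := by simp [hg, hf₁]
    have hσ2g : σ₂ g = (m : ℝ) + (n : ℝ) * f₂ := by simp [hg, hf₂]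
    have hg0 : g ≠ 0 := by
      intro h
      apply hmn
      have e1 : (m : ℝ) + (n : ℝ) * f₁ = 0 := by rw [← hσ1g, h, map_zero]
      have e2 : (m : ℝ) + (n : ℝ) * f₂ = 0 := by rw [← hσ2g, h, map_zero]
      have hn : (n : ℝ) * (f₁ - f₂) = 0 := by linear_combination e1 - e2
      rcases mul_eq_zero.mp hn with h' | h'
      · have hn0 : n = 0 := by exact_mod_cast h'
        have hm0 : (m : ℝ) = 0 := by
          rw [hn0] at e1; simpa using e1
        exact ⟨by exact_mod_cast hm0, hn0⟩
      · exact absurd (sub_eq_zero.mp h') hf12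
    have hcontr := hred g hgI hg0
    have hq1 : qnormu σ₁ σ₂ α⁻¹ α 1 = Real.sqrt ((α⁻¹) ^ 2 + α ^ 2) := by
      simp [qnormu]
    have hx0sq : (σ₁ g) ^ 2 ≤ (α * Real.sqrt t) ^ 2 := by
      rw [hσ1g]
      exact sq_le_sq' (abs_le.mp hm1).1 (abs_le.mp hm1).2
    have hx1sq : (σ₂ g) ^ 2 ≤ (Real.sqrt t / α) ^ 2 := by
      rw [hσ2g]
      exact sq_le_sq' (abs_le.mp hm2).1 (abs_le.mp hm2).2
    have e0 : (α⁻¹) ^ 2 * (α * Real.sqrt t) ^ 2 = t := by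
      rw [mul_pow, Real.sq_sqrt ht0.le]
      field_simp
    have e1 : α ^ 2 * (Real.sqrt t / α) ^ 2 = t := by
      rw [div_pow, Real.sq_sqrt ht0.le]
      field_simp
    have hqg : qnormu σ₁ σ₂ α⁻¹ α g ≤ Real.sqrt (2 * t) := by
      apply Real.sqrt_le_sqrt
      nlinarith [mul_le_mul_of_nonneg_left hx0sq (sq_nonneg α⁻¹),
        mul_le_mul_of_nonneg_left hx1sq (sq_nonneg α)]
    have hfinal : C * qnormu σ₁ σ₂ α⁻¹ α g < Real.sqrt ((α⁻¹) ^ 2 + α ^ 2) := by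
      calc C * qnormu σ₁ σ₂ α⁻¹ α g ≤ C * Real.sqrt (2 * t) :=
            mul_le_mul_of_nonneg_left hqg hC0.le
        _ = Real.sqrt (C ^ 2 * (2 * t)) := by
            refine (?_ : Real.sqrt (C ^ 2 * (2 * t)) = C * Real.sqrt (2 * t)).symm
            rw [Real.sqrt_mul (by positivity : (0:ℝ) ≤ C ^ 2), Real.sqrt_sq hC0.le]
        _ < Real.sqrt ((α⁻¹) ^ 2 + α ^ 2) := by
            apply Real.sqrt_lt_sqrt (by positivity)
            nlinarith [ht2]
    rw [hq1] at hcontr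
    exact absurd (lt_of_le_of_lt hcontr hfinal) (lt_irrefl _)
  have hsq4 : Real.sqrt (4 * C) = 2 * Real.sqrt C := by
    rw [show (4:ℝ) * C = 2 ^ 2 * C by ring, Real.sqrt_mul (by positivity),
      Real.sqrt_sq (by norm_num : (0:ℝ) ≤ 2)]
  have goal1 : Real.sqrt ((α⁻¹) ^ 2 + α ^ 2) ≤ 2 * Real.sqrt C := by
    rw [← hsq4]; exact Real.sqrt_le_sqrt key
  have hαlt : α < 2 * Real.sqrt C := by
    rw [← hsq4, show α = Real.sqrt (α ^ 2) from (Real.sqrt_sq hα.le).symm]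
    apply Real.sqrt_lt_sqrt (sq_nonneg α)
    nlinarith [pow_pos (inv_pos.mpr hα) 2]
  have hαinv : α⁻¹ < 2 * Real.sqrt C := by
    rw [← hsq4, show α⁻¹ = Real.sqrt ((α⁻¹) ^ 2) from (Real.sqrt_sq (by positivity)).symm]
    apply Real.sqrt_lt_sqrt (sq_nonneg _)
    nlinarith [pow_pos hα 2]
  refine ⟨goal1, ?_, hαlt⟩
  rw [div_lt_iff₀ (by positivity)]
  have h6 := mul_lt_mul_of_pos_left hαinv hα
  rw [mul_inv_cancel₀ hα'] at h6
  linarith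
end
end

section
/- Let F be a real quadratic field, C ≥ 1, let I be a fractional ideal of F satisfying condition (⋆), and let {b₁, b₂} be an LLL-reduced basis of the lattice I with ‖b₁‖ equal to the length of the shortest nonzero vector of I (so ‖b₁‖ < √2/C). If g = s₁·b₁ + s₂·b₂ ∈ G with s₁, s₂ ∈ ℤ, then |s₂| ≤ 1. -/
open NumberField
open scoped nonZeroDivisors

noncomputable section

/-- `{b₁, b₂}` is an LLL-reduced basis of the lattice `I ⊆ ℝ²` : it is a `ℤ`-basis of `I`,
and with `μ = ⟨b₂,b₁⟩/⟨b₁,b₁⟩` and `b₂* = b₂ − μ·b₁` one has `|μ| ≤ 1/2` and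
`‖b₂*‖² ≥ (3/4 − μ²)·‖b₁‖²`. -/
def isLLLBasis (F : Type*) [Field F] [NumberField F] (σ₁ σ₂ : F →+* ℝ)
    (I : FractionalIdeal (𝓞 F)⁰ F) (b₁ b₂ : F) : Prop :=
  b₁ ∈ I ∧ b₂ ∈ I ∧
  (∀ g : F, g ∈ I → ∃ s t : ℤ, g = s • b₁ + t • b₂) ∧
  (∀ s t : ℤ, (s • b₁ + t • b₂ : F) = 0 → s = 0 ∧ t = 0) ∧
  |(σ₁ b₂ * σ₁ b₁ + σ₂ b₂ * σ₂ b₁) / ((σ₁ b₁) ^ 2 + (σ₂ b₁) ^ 2)| ≤ 1 / 2 ∧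
  ((σ₁ b₂ - (σ₁ b₂ * σ₁ b₁ + σ₂ b₂ * σ₂ b₁) / ((σ₁ b₁) ^ 2 + (σ₂ b₁) ^ 2) * σ₁ b₁) ^ 2 +
   (σ₂ b₂ - (σ₁ b₂ * σ₁ b₁ + σ₂ b₂ * σ₂ b₁) / ((σ₁ b₁) ^ 2 + (σ₂ b₁) ^ 2) * σ₂ b₁) ^ 2 ≥
    (3 / 4 - ((σ₁ b₂ * σ₁ b₁ + σ₂ b₂ * σ₂ b₁) / ((σ₁ b₁) ^ 2 + (σ₂ b₁) ^ 2)) ^ 2) *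
      ((σ₁ b₁) ^ 2 + (σ₂ b₁) ^ 2))

/-- Key determinant identity: for a `ℤ`-basis `{b₁,b₂}` of a fractional ideal `I` of a real
quadratic field with distinct real embeddings `σ₁, σ₂`, one has
`N(I)² · Δ_F = (σ₁b₁·σ₂b₂ − σ₂b₁·σ₁b₂)²`. -/
theorem aux_det_sq (F : Type*) [Field F] [NumberField F]
    (hdeg : Module.finrank ℚ F = 2)
    (σ₁ σ₂ : F →+* ℝ) (hσ : σ₁ ≠ σ₂) (I : FractionalIdeal (𝓞 F)⁰ F)
    (b₁ b₂ : F) (hb₁I : b₁ ∈ I) (hb₂I : b₂ ∈ I)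
    (hspan : ∀ g : F, g ∈ I → ∃ s t : ℤ, g = s • b₁ + t • b₂)
    (hindep : ∀ s t : ℤ, (s • b₁ + t • b₂ : F) = 0 → s = 0 ∧ t = 0) :
    ((FractionalIdeal.absNorm I : ℝ))^2 * (NumberField.discr F : ℝ)
      = (σ₁ b₁ * σ₂ b₂ - σ₂ b₁ * σ₁ b₂)^2 := by
  classical
  -- the basis of I
  let v : Fin 2 → (I : Submodule (𝓞 F) F) := ![⟨b₁, hb₁I⟩, ⟨b₂, hb₂I⟩]
  have hli : LinearIndependent ℤ v := by
    rw [Fintype.linearIndependent_iff]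
    intro c hc
    have hc' : (c 0) • b₁ + (c 1) • b₂ = 0 := by
      have h := congrArg (Subtype.val) hc
      simpa [v, Fin.sum_univ_two] using h
    have h2 := hindep (c 0) (c 1) hc'
    intro i; fin_cases i
    · exact h2.1
    · exact h2.2
  have hsp : ⊤ ≤ Submodule.span ℤ (Set.range v) := by
    rintro ⟨x, hx⟩ -
    obtain ⟨s, t, hst⟩ := hspan x hx
    have hxe : (⟨x, hx⟩ : (I : Submodule (𝓞 F) F)) = s • v 0 + t • v 1 := Subtype.ext (by simp [v, hst])
    rw [hxe]
    exact Submodule.add_mem _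
      (Submodule.smul_mem _ _ (Submodule.subset_span ⟨0, rfl⟩))
      (Submodule.smul_mem _ _ (Submodule.subset_span ⟨1, rfl⟩))
  let bI : Module.Basis (Fin 2) ℤ (I : Submodule (𝓞 F) F) := Module.Basis.mk hli hsp
  have hbIcoe : ∀ i, ((↑) ∘ bI : Fin 2 → F) i = ![b₁, b₂] i := by
    intro i
    fin_cases i <;> simp [bI, v]
  -- a `ℤ`-basis of `𝓞 F` indexed by `Fin 2`
  have hcardI : Fintype.card (Module.Free.ChooseBasisIndex ℤ (𝓞 F)) = 2 := by
    rw [← Module.finrank_eq_card_chooseBasisIndex, NumberField.RingOfIntegers.rank, hdeg]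
  let e2 : Module.Free.ChooseBasisIndex ℤ (𝓞 F) ≃ Fin 2 := Fintype.equivFinOfCardEq hcardI
  let b : Module.Basis (Fin 2) ℤ (𝓞 F) := (NumberField.RingOfIntegers.basis F).reindex e2
  let b₀ : Module.Basis (Fin 2) ℚ F := b.localizationLocalization ℚ ℤ⁰ F
  have hdet : |b₀.det ((↑) ∘ bI)| = FractionalIdeal.absNorm I :=
    FractionalIdeal.abs_det_basis_change b I bI
  have hb₀discr : Algebra.discr ℚ ⇑b₀ = (NumberField.discr F : ℚ) := by
    have h1 : ⇑b₀ = ⇑(NumberField.integralBasis F) ∘ ⇑e2.symm := by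
      funext i
      simp [b₀, b, Module.Basis.localizationLocalization_apply, NumberField.integralBasis_apply]
    rw [h1]
    rw [Algebra.discr_reindex (A := ℚ) (B := F) (NumberField.integralBasis F) e2]
    exact (NumberField.coe_discr F).symm
  have hP : Algebra.discr ℚ ((↑) ∘ bI : Fin 2 → F)
      = (FractionalIdeal.absNorm I)^2 * (NumberField.discr F : ℚ) := by
    have h2 := Algebra.discr_of_matrix_vecMul (A := ℚ) (B := F) ⇑b₀ (b₀.toMatrix ((↑) ∘ bI))
    rw [Module.Basis.toMatrix_map_vecMul] at h2
    rw [h2, hb₀discr, ← Module.Basis.det_apply, ← sq_abs, hdet]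
  -- embeddings into ℂ
  let τ₁ : F →ₐ[ℚ] ℂ := RingHom.equivRatAlgHom F ℂ (Complex.ofRealHom.comp σ₁)
  let τ₂ : F →ₐ[ℚ] ℂ := RingHom.equivRatAlgHom F ℂ (Complex.ofRealHom.comp σ₂)
  have hτapp₁ : ∀ x, τ₁ x = ((σ₁ x : ℝ) : ℂ) := fun x => rfl
  have hτapp₂ : ∀ x, τ₂ x = ((σ₂ x : ℝ) : ℂ) := fun x => rfl
  have hτne : τ₁ ≠ τ₂ := by
    intro h
    apply hσ
    ext x
    have hx := congrArg (fun ψ : F →ₐ[ℚ] ℂ => ψ x) h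
    simp only [hτapp₁, hτapp₂] at hx
    exact_mod_cast hx
  have hcard : Fintype.card (F →ₐ[ℚ] ℂ) = 2 := by
    rw [AlgHom.card]; exact hdeg
  let tfun : Fin 2 → (F →ₐ[ℚ] ℂ) := ![τ₁, τ₂]
  have htinj : Function.Injective tfun := by
    intro i j hij
    fin_cases i <;> fin_cases j
    · rfl
    · exact ((hτne hij).elim : _)
    · exact ((hτne hij.symm).elim : _)
    · rfl
  let e : Fin 2 ≃ (F →ₐ[ℚ] ℂ) :=
    Equiv.ofBijective tfun ((Fintype.bijective_iff_injective_and_card tfun).mpr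
      ⟨htinj, by simp [hcard]⟩)
  have hemb := Algebra.discr_eq_det_embeddingsMatrixReindex_pow_two ℚ ℂ ((↑) ∘ bI) e
  have hentry : ∀ i j, Algebra.embeddingsMatrixReindex ℚ ℂ ((↑) ∘ bI) e i j
      = tfun j (((↑) ∘ bI : Fin 2 → F) i) := fun i j => rfl
  have hM : (Algebra.embeddingsMatrixReindex ℚ ℂ ((↑) ∘ bI) e).det
      = ((σ₁ b₁ * σ₂ b₂ - σ₂ b₁ * σ₁ b₂ : ℝ) : ℂ) := by
    rw [Matrix.det_fin_two, hentry 0 0, hentry 0 1, hentry 1 0, hentry 1 1,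
      hbIcoe 0, hbIcoe 1]
    show τ₁ b₁ * τ₂ b₂ - τ₂ b₁ * τ₁ b₂ = _
    rw [hτapp₁, hτapp₂, hτapp₁, hτapp₂]
    push_cast
    ring
  rw [hP, hM] at hemb
  rw [eq_ratCast (algebraMap ℚ ℂ)] at hemb
  apply Complex.ofReal_injective
  push_cast at hemb ⊢
  linear_combination hemb

set_option maxHeartbeats 1600000 in
/-- Let `F` be a real quadratic field, `C ≥ 1`, `I` a fractional ideal satisfying `(⋆)`,
and `{b₁, b₂}` an LLL-reduced basis of the lattice `I` with `‖b₁‖` equal to the length of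
the shortest nonzero vector of `I`. If `g = s₁·b₁ + s₂·b₂ ∈ G` with `s₁, s₂ ∈ ℤ`, then
`|s₂| ≤ 1`. -/
theorem stmt_11 (F : Type*) [Field F] [NumberField F]
    (hdeg : Module.finrank ℚ F = 2)
    (σ₁ σ₂ : F →+* ℝ) (hσ : σ₁ ≠ σ₂)
    (C : ℝ) (hC : 1 ≤ C) (I : FractionalIdeal (𝓞 F)⁰ F)
    (hstar : starCond F σ₁ σ₂ C I)
    (b₁ b₂ : F) (hLLL : isLLLBasis F σ₁ σ₂ I b₁ b₂)
    (hshort : ∀ g : F, g ∈ I → g ≠ 0 → qnorm σ₁ σ₂ b₁ ≤ qnorm σ₁ σ₂ g) :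
    ∀ s₁ s₂ : ℤ, inG F σ₁ σ₂ C I (s₁ • b₁ + s₂ • b₂) → |s₂| ≤ 1 := by
  obtain ⟨hb₁I, hb₂I, hspan, hindep, hμ, hred⟩ := hLLL
  obtain ⟨-, -, f, hfI, hf0, hfmin, hf1, hf2⟩ := hstar
  intro s₁ s₂ hg
  obtain ⟨hgI, hg0, -, hGnorm⟩ := hg
  have hC0 : (0:ℝ) < C := lt_of_lt_of_le one_pos hC
  have hb₁0 : b₁ ≠ 0 := by
    intro h
    have := (hindep 1 0 (by simp [h])).1
    norm_num at this
  -- b₁ is a shortest vector with 1/C < ‖b₁‖ < √2/C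
  have hq1 : 1 / C < qnorm σ₁ σ₂ b₁ := lt_of_lt_of_le hf1 (hfmin b₁ hb₁I hb₁0)
  have hq2 : qnorm σ₁ σ₂ b₁ < Real.sqrt 2 / C := lt_of_le_of_lt (hshort f hfI hf0) hf2
  simp only [qnorm] at hq1 hq2 hGnorm
  set B1 : ℝ := (σ₁ b₁) ^ 2 + (σ₂ b₁) ^ 2 with hB1def
  set ip : ℝ := σ₁ b₂ * σ₁ b₁ + σ₂ b₂ * σ₂ b₁ with hipdef
  set μ : ℝ := ip / B1 with hμdef
  set w₁ : ℝ := σ₁ b₂ - μ * σ₁ b₁ with hw₁def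
  set w₂ : ℝ := σ₂ b₂ - μ * σ₂ b₁ with hw₂def
  set W : ℝ := w₁ ^ 2 + w₂ ^ 2 with hWdef
  have hB1pos : 0 < B1 := by
    have h0 : (0:ℝ) ≤ 1 / C := by positivity
    exact lt_of_le_of_lt (sq_nonneg (1 / C)) ((Real.lt_sqrt h0).mp hq1)
  have hB1ne' : (σ₁ b₁) ^ 2 + (σ₂ b₁) ^ 2 ≠ 0 := ne_of_gt hB1pos
  have hB1lt : B1 < 2 / C ^ 2 := by
    have h0 : (0:ℝ) < Real.sqrt 2 / C := by positivity
    have h1 := (Real.sqrt_lt' h0).mp hq2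
    have h2 : (Real.sqrt 2 / C) ^ 2 = 2 / C ^ 2 := by
      rw [div_pow, Real.sq_sqrt (by norm_num : (0:ℝ) ≤ 2)]
    exact h2 ▸ h1
  have hμsq : μ ^ 2 ≤ 1 / 4 := by
    have h := abs_le.mp hμ
    nlinarith only [h.1, h.2]
  have hWge : W ≥ B1 / 2 := by
    have hfac : 1 / 2 * B1 ≤ (3 / 4 - μ ^ 2) * B1 :=
      mul_le_mul_of_nonneg_right (by linarith only [hμsq]) hB1pos.le
    linarith only [hred, hfac]
  have hWpos : 0 < W := lt_of_lt_of_le (by positivity) hWge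
  -- the ideal is nonzero
  have hI0 : I ≠ 0 := by
    rintro rfl
    exact hg0 (by simpa using hgI)
  -- covolume
  have hdetsq := aux_det_sq F hdeg σ₁ σ₂ hσ I b₁ b₂ hb₁I hb₂I hspan hindep
  have hNpos : (0:ℝ) < (FractionalIdeal.absNorm I : ℝ) := by
    have hNne : (FractionalIdeal.absNorm I : ℝ) ≠ 0 := by
      simp only [ne_eq, Rat.cast_eq_zero]
      rw [FractionalIdeal.absNorm_eq_zero_iff]
      exact hI0
    have h3 : (0:ℚ) ≤ FractionalIdeal.absNorm I := by
      rw [FractionalIdeal.absNorm_eq]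
      positivity
    have h4 : (0:ℝ) ≤ (FractionalIdeal.absNorm I : ℝ) := by exact_mod_cast h3
    exact lt_of_le_of_ne h4 (Ne.symm hNne)
  have hΔpos : (0:ℝ) < ((NumberField.discr F : ℤ) : ℝ) := by
    have hΔne : ((NumberField.discr F : ℤ) : ℝ) ≠ 0 := by
      exact_mod_cast NumberField.discr_ne_zero F
    rcases lt_or_gt_of_ne hΔne with h | h
    · exfalso
      have h1 := mul_neg_of_pos_of_neg (pow_pos hNpos 2) h
      have h2 := sq_nonneg (σ₁ b₁ * σ₂ b₂ - σ₂ b₁ * σ₁ b₂)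
      linarith only [h1, h2, hdetsq.le, hdetsq.ge]
    · exact h
  have hcovpos : 0 < qcovol F I := by
    rw [qcovol]
    exact mul_pos (Real.sqrt_pos.mpr hΔpos) hNpos
  have hcov2 : (qcovol F I) ^ 2 = B1 * W := by
    rw [qcovol, mul_pow, Real.sq_sqrt hΔpos.le]
    have hlag : ((FractionalIdeal.absNorm I : ℝ)) ^ 2 * ((NumberField.discr F : ℤ) : ℝ)
        = B1 * W := by
      rw [hdetsq, hWdef, hw₁def, hw₂def, hμdef, hipdef, hB1def]
      field_simp
      ring
    linarith only [hlag]
  -- components of g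
  have hg1 : σ₁ (s₁ • b₁ + s₂ • b₂) = (s₁:ℝ) * σ₁ b₁ + (s₂:ℝ) * σ₁ b₂ := by
    rw [map_add, map_zsmul, map_zsmul, zsmul_eq_mul, zsmul_eq_mul]
  have hg2 : σ₂ (s₁ • b₁ + s₂ • b₂) = (s₁:ℝ) * σ₂ b₁ + (s₂:ℝ) * σ₂ b₂ := by
    rw [map_add, map_zsmul, map_zsmul, zsmul_eq_mul, zsmul_eq_mul]
  have hdecomp : (σ₁ (s₁ • b₁ + s₂ • b₂)) ^ 2 + (σ₂ (s₁ • b₁ + s₂ • b₂)) ^ 2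
      = ((s₁:ℝ) + (s₂:ℝ) * μ) ^ 2 * B1 + (s₂:ℝ) ^ 2 * W := by
    rw [hg1, hg2, hWdef, hw₁def, hw₂def, hμdef, hipdef, hB1def]
    field_simp
    ring
  -- the norm bound
  have hR : 0 < 4 / Real.pi * C * qcovol F I := by
    have := Real.pi_pos
    positivity
  have hglt : (σ₁ (s₁ • b₁ + s₂ • b₂)) ^ 2 + (σ₂ (s₁ • b₁ + s₂ • b₂)) ^ 2
      < (4 / Real.pi * C * qcovol F I) ^ 2 := (Real.sqrt_lt' hR).mp hGnorm
  have hπ : (3:ℝ) < Real.pi := Real.pi_gt_three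
  have hπpos : (0:ℝ) < Real.pi := Real.pi_pos
  have hR2 : (4 / Real.pi * C * qcovol F I) ^ 2 = 16 / Real.pi ^ 2 * C ^ 2 * (B1 * W) := by
    rw [mul_pow, mul_pow, hcov2, div_pow]
    norm_num
  have hCB : C ^ 2 * B1 < 2 := by
    have h2C : (2 / C ^ 2) * C ^ 2 = 2 := by field_simp
    have h5 := mul_lt_mul_of_pos_right hB1lt (pow_pos hC0 2)
    rw [h2C] at h5
    linarith only [h5]
  have hKpos : (0:ℝ) < 16 / Real.pi ^ 2 := by positivity
  have hK2 : 16 / Real.pi ^ 2 < 2 := by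
    rw [div_lt_iff₀ (by positivity)]
    nlinarith only [hπ]
  have hts : (s₂:ℝ) ^ 2 * W < 16 / Real.pi ^ 2 * C ^ 2 * (B1 * W) := by
    have h1 : (s₂:ℝ) ^ 2 * W ≤ (σ₁ (s₁ • b₁ + s₂ • b₂)) ^ 2 + (σ₂ (s₁ • b₁ + s₂ • b₂)) ^ 2 := by
      rw [hdecomp]
      nlinarith only [sq_nonneg ((s₁:ℝ) + (s₂:ℝ) * μ), hB1pos.le]
    calc (s₂:ℝ) ^ 2 * W ≤ _ := h1
      _ < (4 / Real.pi * C * qcovol F I) ^ 2 := hglt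
      _ = _ := hR2
  have ht4 : (s₂:ℝ) ^ 2 < 4 := by
    have c1 : 16 / Real.pi ^ 2 * (C ^ 2 * B1) < 16 / Real.pi ^ 2 * 2 :=
      mul_lt_mul_of_pos_left hCB hKpos
    have c4 : 16 / Real.pi ^ 2 * C ^ 2 * B1 < 4 := by
      have c2 : 16 / Real.pi ^ 2 * 2 < 4 := by linarith only [hK2]
      have c1' : 16 / Real.pi ^ 2 * C ^ 2 * B1 = 16 / Real.pi ^ 2 * (C ^ 2 * B1) := by ring
      linarith only [c1, c2, c1'.le, c1'.ge]
    have c6 := mul_lt_mul_of_pos_right c4 hWpos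
    have c5 : (s₂:ℝ) ^ 2 * W < 4 * W := by
      calc (s₂:ℝ) ^ 2 * W < 16 / Real.pi ^ 2 * C ^ 2 * (B1 * W) := hts
        _ = 16 / Real.pi ^ 2 * C ^ 2 * B1 * W := by ring
        _ < 4 * W := c6
    exact lt_of_mul_lt_mul_right c5 hWpos.le
  have hint : s₂ ^ 2 < 4 := by exact_mod_cast ht4
  by_contra hcon
  push_neg at hcon
  have h2 : 2 ≤ |s₂| := hcon
  have h3 : (4:ℤ) ≤ |s₂| * |s₂| := by
    calc (4:ℤ) = 2 * 2 := by norm_num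
      _ ≤ |s₂| * |s₂| := mul_le_mul h2 h2 (by norm_num) (abs_nonneg _)
  have h4 : |s₂| * |s₂| = s₂ ^ 2 := by rw [← abs_mul, abs_mul_self, sq]
  omega
end
end

section
/- Let F be a real quadratic field, C ≥ 1, and let I be a fractional ideal of F satisfying condition (⋆). Then the set G is finite and, counting vectors up to sign, contains fewer than 17C + 3 elements; equivalently, the cardinality of G is less than 34C + 6. -/
open NumberField
open scoped nonZeroDivisors

noncomputable section

def edet {F : Type*} [Field F] (σ₁ σ₂ : F →+* ℝ) (x y : F) : ℝ :=
  σ₁ x * σ₂ y - σ₂ x * σ₁ y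

lemma edet_zsmul {F : Type*} [Field F] (σ₁ σ₂ : F →+* ℝ) (u v : F) (a0 a1 c0 c1 : ℤ) :
    edet σ₁ σ₂ (a0 • u + a1 • v) (c0 • u + c1 • v)
      = (a0 * c1 - a1 * c0 : ℤ) * edet σ₁ σ₂ u v := by
  simp only [edet, map_add, map_zsmul, zsmul_eq_mul, map_mul, map_intCast]
  push_cast
  ring

section mainaux
variable {F : Type*} [Field F] [NumberField F]

lemma exists_emb_equiv (hdeg : Module.finrank ℚ F = 2) (σ₁ σ₂ : F →+* ℝ) (hσ : σ₁ ≠ σ₂) :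
    ∃ e : Fin 2 ≃ (F →ₐ[ℚ] ℂ),
      (∀ x : F, e 0 x = (σ₁ x : ℂ)) ∧ (∀ x : F, e 1 x = (σ₂ x : ℂ)) := by
  let ψ₁ : F →ₐ[ℚ] ℂ := (Complex.ofRealHom.comp σ₁).toRatAlgHom
  let ψ₂ : F →ₐ[ℚ] ℂ := (Complex.ofRealHom.comp σ₂).toRatAlgHom
  have hne : ψ₁ ≠ ψ₂ := by
    intro h
    apply hσ
    ext x
    have := congrArg (fun φ : F →ₐ[ℚ] ℂ => φ x) h
    simpa [ψ₁, ψ₂, RingHom.toRatAlgHom, Complex.ofReal_inj] using this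
  let g : Fin 2 → (F →ₐ[ℚ] ℂ) := ![ψ₁, ψ₂]
  have hinj : Function.Injective g := by
    intro i j hij
    fin_cases i <;> fin_cases j <;> simp_all [g]
  have hcard : Fintype.card (Fin 2) = Fintype.card (F →ₐ[ℚ] ℂ) := by
    rw [AlgHom.card ℚ F ℂ, hdeg, Fintype.card_fin]
  have hbij : Function.Bijective g :=
    (Fintype.bijective_iff_injective_and_card g).2 ⟨hinj, hcard⟩
  exact ⟨Equiv.ofBijective g hbij, fun x => rfl, fun x => rfl⟩

lemma norm_eq_mul (hdeg : Module.finrank ℚ F = 2) (σ₁ σ₂ : F →+* ℝ) (hσ : σ₁ ≠ σ₂) (x : F) :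
    ((Algebra.norm ℚ x : ℚ) : ℝ) = σ₁ x * σ₂ x := by
  obtain ⟨e, he0, he1⟩ := exists_emb_equiv hdeg σ₁ σ₂ hσ
  have h := Algebra.norm_eq_prod_embeddings ℚ ℂ x
  rw [← Equiv.prod_comp e (fun φ : F →ₐ[ℚ] ℂ => φ x), Fin.prod_univ_two, he0, he1] at h
  have h2 : (((σ₁ x * σ₂ x : ℝ)) : ℂ) = (((Algebra.norm ℚ x : ℚ) : ℝ) : ℂ) := by
    push_cast
    rw [← eq_ratCast (algebraMap ℚ ℂ) (Algebra.norm ℚ x)]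
    exact h.symm
  exact (Complex.ofReal_injective h2).symm

lemma discr_eq_sq (hdeg : Module.finrank ℚ F = 2) (σ₁ σ₂ : F →+* ℝ) (hσ : σ₁ ≠ σ₂) :
    ∃ (bO : Module.Basis (Fin 2) ℤ (𝓞 F)) (b : Module.Basis (Fin 2) ℚ F),
      (∀ i, b i = algebraMap (𝓞 F) F (bO i)) ∧
      ((NumberField.discr F : ℝ) = (edet σ₁ σ₂ (b 0) (b 1))^2) := by
  obtain ⟨e, he0, he1⟩ := exists_emb_equiv hdeg σ₁ σ₂ hσ
  have hcard : Fintype.card (Module.Free.ChooseBasisIndex ℤ (𝓞 F)) = 2 := by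
    rw [← Module.finrank_eq_card_chooseBasisIndex, RingOfIntegers.rank, hdeg]
  let r : Fin 2 ≃ Module.Free.ChooseBasisIndex ℤ (𝓞 F) :=
    Fintype.equivOfCardEq (by rw [Fintype.card_fin, hcard])
  set b : Module.Basis (Fin 2) ℚ F := (integralBasis F).reindex r.symm with hbdef
  refine ⟨(RingOfIntegers.basis F).reindex r.symm, b, fun i => by
    simp [hbdef, integralBasis_apply], ?_⟩
  have h0 : Algebra.discr ℚ (⇑b) = Algebra.discr ℚ (integralBasis F) := by
    rw [hbdef, Module.Basis.coe_reindex]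
    exact Algebra.discr_reindex ℚ (integralBasis F) r.symm
  have h1 := Algebra.discr_eq_det_embeddingsMatrixReindex_pow_two ℚ ℂ b e
  have h2 : (Algebra.embeddingsMatrixReindex ℚ ℂ (⇑b) e).det
      = ((edet σ₁ σ₂ (b 0) (b 1) : ℝ) : ℂ) := by
    rw [Matrix.det_fin_two]
    simp only [Algebra.embeddingsMatrixReindex, Matrix.reindex_apply, Equiv.refl_symm,
      Matrix.submatrix_apply, Equiv.coe_refl, id_eq, Algebra.embeddingsMatrix_apply,
      Equiv.apply_symm_apply, Equiv.symm_symm, edet]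
    rw [he0, he1, he0, he1]
    push_cast
    ring
  rw [h2] at h1
  have h3 : ((NumberField.discr F : ℚ) : ℂ) = (((edet σ₁ σ₂ (b 0) (b 1))^2 : ℝ) : ℂ) := by
    rw [coe_discr, ← h0, ← eq_ratCast (algebraMap ℚ ℂ), h1]
    push_cast
    ring
  have h4 : ((NumberField.discr F : ℝ) : ℂ) = (((edet σ₁ σ₂ (b 0) (b 1))^2 : ℝ) : ℂ) := by
    push_cast at h3 ⊢
    exact h3
  exact Complex.ofReal_injective h4

lemma edet_ge_of_mem_ideal (hdeg : Module.finrank ℚ F = 2) (σ₁ σ₂ : F →+* ℝ) (hσ : σ₁ ≠ σ₂)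
    (J : Ideal (𝓞 F)) (hJ : J ≠ ⊥) (x y : 𝓞 F) (hx : x ∈ J) (hy : y ∈ J)
    (hD : edet σ₁ σ₂ (algebraMap (𝓞 F) F x) (algebraMap (𝓞 F) F y) ≠ 0) :
    Real.sqrt (NumberField.discr F : ℝ) * (Ideal.absNorm J : ℝ)
      ≤ |edet σ₁ σ₂ (algebraMap (𝓞 F) F x) (algebraMap (𝓞 F) F y)| := by
  obtain ⟨bO, b, hb, hdiscr⟩ := discr_eq_sq hdeg σ₁ σ₂ hσ
  let bJ : Module.Basis (Fin 2) ℤ J := Ideal.selfBasis bO J hJ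
  let ℓ : J →ₗ[ℤ] F :=
    ((Algebra.linearMap (𝓞 F) F).restrictScalars ℤ) ∘ₗ ((J.subtype).restrictScalars ℤ)
  have hℓ : ∀ z : J, ℓ z = algebraMap (𝓞 F) F (z : 𝓞 F) := fun z => rfl
  set a := bJ.repr ⟨x, hx⟩ with ha
  set c := bJ.repr ⟨y, hy⟩ with hc
  set u : Fin 2 → F := fun i => algebraMap (𝓞 F) F ((bJ i : 𝓞 F)) with hudef
  have hxs : algebraMap (𝓞 F) F x = a 0 • u 0 + a 1 • u 1 := by
    have h := congrArg ℓ (bJ.sum_repr ⟨x, hx⟩)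
    rw [map_sum] at h
    simp only [map_smul, Fin.sum_univ_two] at h
    exact h.symm
  have hys : algebraMap (𝓞 F) F y = c 0 • u 0 + c 1 • u 1 := by
    have h := congrArg ℓ (bJ.sum_repr ⟨y, hy⟩)
    rw [map_sum] at h
    simp only [map_smul, Fin.sum_univ_two] at h
    exact h.symm
  set P := bO.toMatrix ((↑) ∘ bJ) with hP
  have hu : ∀ j, u j = (P 0 j) • (b 0) + (P 1 j) • (b 1) := by
    intro j
    have h := congrArg (algebraMap (𝓞 F) F) (bO.sum_repr ((bJ j : 𝓞 F)))
    rw [map_sum] at h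
    simp only [map_zsmul, Fin.sum_univ_two] at h
    have hj : u j = algebraMap (𝓞 F) F ((bJ j : 𝓞 F)) := rfl
    rw [hj, ← h]
    simp only [hP, Module.Basis.toMatrix_apply, Function.comp_apply, hb]
  have hDfact : edet σ₁ σ₂ (algebraMap (𝓞 F) F x) (algebraMap (𝓞 F) F y)
      = ((a 0 * c 1 - a 1 * c 0 : ℤ) : ℝ) * (((P 0 0) * (P 1 1) - (P 1 0) * (P 0 1) : ℤ) : ℝ)
        * edet σ₁ σ₂ (b 0) (b 1) := by
    rw [hxs, hys, edet_zsmul, hu 0, hu 1, edet_zsmul]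
    ring
  have hdetP : P.det = P 0 0 * P 1 1 - P 1 0 * P 0 1 := by
    rw [Matrix.det_fin_two]; ring
  have habsP : |((P 0 0 * P 1 1 - P 1 0 * P 0 1 : ℤ) : ℝ)| = (Ideal.absNorm J : ℝ) := by
    have h := Ideal.natAbs_det_basis_change bO J bJ
    rw [Module.Basis.det_apply, ← hP, hdetP] at h
    rw [← Int.cast_abs, Int.abs_eq_natAbs, h]
    norm_cast
  have hsq : Real.sqrt (NumberField.discr F : ℝ) = |edet σ₁ σ₂ (b 0) (b 1)| := by
    rw [hdiscr, Real.sqrt_sq_eq_abs]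
  have hA : (a 0 * c 1 - a 1 * c 0 : ℤ) ≠ 0 := by
    intro h0
    apply hD
    rw [hDfact, h0]
    simp
  have hA1 : (1 : ℝ) ≤ |((a 0 * c 1 - a 1 * c 0 : ℤ) : ℝ)| := by
    rw [← Int.cast_abs]
    exact_mod_cast Int.one_le_abs hA
  rw [hDfact, abs_mul, abs_mul, habsP, hsq]
  have h1 : (0:ℝ) ≤ (Ideal.absNorm J : ℝ) := by positivity
  have h2 : (0:ℝ) ≤ |edet σ₁ σ₂ (b 0) (b 1)| := abs_nonneg _
  nlinarith [mul_nonneg h1 h2]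

omit [NumberField F] in
lemma edet_zero_left (σ₁ σ₂ : F →+* ℝ) (y : F) : edet σ₁ σ₂ 0 y = 0 := by simp [edet]

lemma qcovol_le_edet (hdeg : Module.finrank ℚ F = 2) (σ₁ σ₂ : F →+* ℝ) (hσ : σ₁ ≠ σ₂)
    (I : FractionalIdeal (𝓞 F)⁰ F) (x y : F) (hx : x ∈ I) (hy : y ∈ I)
    (hD : edet σ₁ σ₂ x y ≠ 0) :
    qcovol F I ≤ |edet σ₁ σ₂ x y| := by
  set d : 𝓞 F := (I.den : 𝓞 F) with hd
  have hd0 : d ≠ 0 := nonZeroDivisors.coe_ne_zero I.den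
  set dF : F := algebraMap (𝓞 F) F d with hdF
  have hdF0 : dF ≠ 0 := by
    simpa [hdF] using (map_ne_zero_iff _ (IsFractionRing.injective (𝓞 F) F)).2 hd0
  have hsm : ∀ z : F, z ∈ I → dF * z ∈ Submodule.map (Algebra.linearMap (𝓞 F) F) I.num := by
    intro z hz
    rw [← FractionalIdeal.den_mul_self_eq_num]
    have := Submodule.smul_mem_pointwise_smul z I.den (I : Submodule (𝓞 F) F)
      (FractionalIdeal.mem_coe.2 hz)
    rwa [Submonoid.smul_def, Algebra.smul_def] at this
  obtain ⟨x', hx'J, hx'⟩ := hsm x hx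
  obtain ⟨y', hy'J, hy'⟩ := hsm y hy
  have hfact : edet σ₁ σ₂ (dF * x) (dF * y) = (σ₁ dF * σ₂ dF) * edet σ₁ σ₂ x y := by
    simp only [edet, map_mul]; ring
  set nd : ℝ := σ₁ dF * σ₂ dF with hnd
  have hnd0 : nd ≠ 0 := mul_ne_zero (map_ne_zero σ₁ |>.2 hdF0) (map_ne_zero σ₂ |>.2 hdF0)
  have hndeq : |nd| = |((Algebra.norm ℤ d : ℤ) : ℝ)| := by
    have h1 : ((Algebra.norm ℤ d : ℤ) : ℝ) = nd := by
      rw [hnd, ← norm_eq_mul hdeg σ₁ σ₂ hσ dF]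
      norm_cast
      rw [Algebra.coe_norm_int d, RingOfIntegers.coe_eq_algebraMap]
    rw [h1]
  have hJne : I.num ≠ ⊥ := by
    intro h0
    rw [h0] at hx'J
    have hx'J : x' = 0 := by simpa using hx'J
    apply hD
    have hx0 : x = 0 := by
      have : dF * x = 0 := by rw [← hx', hx'J]; simp
      rcases mul_eq_zero.1 this with h | h
      · exact absurd h hdF0
      · exact h
    rw [hx0]
    exact edet_zero_left σ₁ σ₂ y
  have hDd : edet σ₁ σ₂ (algebraMap (𝓞 F) F x') (algebraMap (𝓞 F) F y') = nd * edet σ₁ σ₂ x y := by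
    have h1 : algebraMap (𝓞 F) F x' = dF * x := hx'
    have h2 : algebraMap (𝓞 F) F y' = dF * y := hy'
    rw [h1, h2, hfact]
  have hDd0 : edet σ₁ σ₂ (algebraMap (𝓞 F) F x') (algebraMap (𝓞 F) F y') ≠ 0 := by
    rw [hDd]; exact mul_ne_zero hnd0 hD
  have hmain := edet_ge_of_mem_ideal hdeg σ₁ σ₂ hσ I.num hJne x' y' hx'J hy'J hDd0
  rw [hDd, abs_mul] at hmain
  -- absNorm I = absNorm num / |norm d|
  have habs : (FractionalIdeal.absNorm I : ℝ)
      = (Ideal.absNorm I.num : ℝ) / |((Algebra.norm ℤ d : ℤ) : ℝ)| := by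
    have := FractionalIdeal.absNorm_eq I
    rw [this]
    push_cast
    rfl
  rw [qcovol, habs, ← hndeq]
  rw [div_eq_mul_inv, ← mul_assoc]
  have hpos : 0 < |nd| := abs_pos.2 hnd0
  rw [mul_inv_le_iff₀ hpos]
  calc Real.sqrt (NumberField.discr F : ℝ) * (Ideal.absNorm I.num : ℝ)
      ≤ |nd| * |edet σ₁ σ₂ x y| := hmain
    _ = |edet σ₁ σ₂ x y| * |nd| := by ring

end mainaux

lemma floor_eq_abs_sub_lt (a b : ℝ) (h : ⌊a⌋ = ⌊b⌋) : |a - b| < 1 := by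
  have h1 := Int.floor_le a
  have h2 := Int.lt_floor_add_one a
  have h3 := Int.floor_le b
  have h4 := Int.lt_floor_add_one b
  have h5 : ((⌊a⌋ : ℤ) : ℝ) = ((⌊b⌋ : ℤ) : ℝ) := by rw [h]
  rw [abs_lt]
  constructor <;> linarith

lemma abs_le_of_sq_le (x c : ℝ) (hc : 0 ≤ c) (h : x^2 ≤ c^2) : |x| ≤ c := by
  have := Real.sqrt_le_sqrt h
  rwa [Real.sqrt_sq_eq_abs, Real.sqrt_sq hc] at this

lemma abs_lt_of_sq_lt (x c : ℝ) (hc : 0 ≤ c) (h : x^2 < c^2) : |x| < c := by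
  have := Real.sqrt_lt_sqrt (sq_nonneg x) h
  rwa [Real.sqrt_sq_eq_abs, Real.sqrt_sq hc] at this

set_option maxHeartbeats 2000000 in
/-- Let `F` be a real quadratic field, `C ≥ 1`, and `I` a fractional ideal satisfying
condition `(⋆)`. Then the set `G` is finite and, counting vectors up to sign, has fewer
than `17C + 3` elements; equivalently, the cardinality of `G` is less than `34C + 6`. -/
theorem stmt_12 (F : Type*) [Field F] [NumberField F]
    (hdeg : Module.finrank ℚ F = 2)
    (σ₁ σ₂ : F →+* ℝ) (hσ : σ₁ ≠ σ₂)
    (C : ℝ) (hC : 1 ≤ C) (I : FractionalIdeal (𝓞 F)⁰ F)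
    (hstar : starCond F σ₁ σ₂ C I) :
    {g : F | inG F σ₁ σ₂ C I g}.Finite ∧
    ({g : F | inG F σ₁ σ₂ C I g}.ncard : ℝ) < 34 * C + 6 := by
  obtain ⟨⟨h1I, hprim⟩, hS1, f, hfI, hf0, hmin, hflow, hfup⟩ := hstar
  have hC0 : (0 : ℝ) < C := lt_of_lt_of_le one_pos hC
  have hπ : (0 : ℝ) < Real.pi := Real.pi_pos
  have hπ3 : (3 : ℝ) < Real.pi := Real.pi_gt_three
  have hfsum0 : (0:ℝ) ≤ (σ₁ f)^2 + (σ₂ f)^2 := by positivity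
  have hfs : (σ₁ f)^2 + (σ₂ f)^2 < 2 / C^2 := by
    have h2 : (qnorm σ₁ σ₂ f)^2 < (Real.sqrt 2 / C)^2 := by
      apply pow_lt_pow_left₀ hfup (Real.sqrt_nonneg _) (by norm_num)
    rwa [qnorm, Real.sq_sqrt hfsum0, div_pow, Real.sq_sqrt (by norm_num : (0:ℝ) ≤ 2)] at h2
  have hfneq : σ₁ f ≠ σ₂ f := by
    intro heq
    apply hS1 f hfI hf0
    have e2 : (2:ℝ)/C^2 = 2*(1/C^2) := by ring
    have hsq1 : (σ₁ f)^2 < 1 / C^2 := by rw [← heq] at hfs; linarith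
    have habs1 : |σ₁ f| ≤ 1 / C := by
      apply abs_le_of_sq_le _ _ (by positivity)
      rw [div_pow, one_pow]
      exact hsq1.le
    exact ⟨habs1, by rwa [← heq], hfs⟩
  have hcov : qcovol F I ≤ |σ₂ f - σ₁ f| := by
    have hD : edet σ₁ σ₂ (1:F) f = σ₂ f - σ₁ f := by simp [edet]
    have := qcovol_le_edet hdeg σ₁ σ₂ hσ I 1 f h1I hfI
      (by rw [hD]; exact sub_ne_zero.2 (Ne.symm hfneq))
    rwa [hD] at this
  have hcov2 : qcovol F I < 2 / C := by
    have h' : (σ₂ f - σ₁ f)^2 < (2/C)^2 := by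
      have e : ((2:ℝ)/C)^2 = 2*(2/C^2) := by ring
      nlinarith [sq_nonneg (σ₁ f + σ₂ f), hfs, e]
    exact lt_of_le_of_lt hcov (abs_lt_of_sq_lt _ _ (by positivity) h')
  have hcovnn : 0 ≤ qcovol F I := by
    have h1 : (0:ℚ) ≤ FractionalIdeal.absNorm I := FractionalIdeal.absNorm_nonneg I
    have h2 : (0:ℝ) ≤ (FractionalIdeal.absNorm I : ℝ) := by exact_mod_cast h1
    exact mul_nonneg (Real.sqrt_nonneg _) h2
  set R : ℝ := (4 / Real.pi) * C * qcovol F I with hR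
  have hR0 : 0 ≤ R := by positivity
  have hCR : C * R < 8 * C / 3 := by
    have h1 : C * R = (4 / Real.pi) * C^2 * qcovol F I := by rw [hR]; ring
    have h2 : (4 / Real.pi) * C^2 * qcovol F I < (4 / Real.pi) * C^2 * (2 / C) :=
      mul_lt_mul_of_pos_left hcov2 (by positivity)
    have h3 : (4 / Real.pi) * C^2 * (2 / C) = 8 * C / Real.pi := by field_simp; ring
    have h4 : 8 * C / Real.pi < 8 * C / 3 :=
      div_lt_div_of_pos_left (by positivity) (by norm_num) hπ3
    linarith
  set M : ℕ := ⌈C * R⌉₊ with hM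
  have hMlt : (M : ℝ) < C * R + 1 := Nat.ceil_lt_add_one (by positivity)
  have hMge : C * R ≤ (M : ℝ) := Nat.le_ceil _
  set Φ : F → ℤ × ℤ := fun g => (⌊C * σ₁ g⌋, ⌊C * σ₂ g⌋) with hΦ
  set G : Set F := {g : F | inG F σ₁ σ₂ C I g} with hG
  have key : ∀ x : ℝ, |C * x| < 1 → |x| < 1/C := by
    intro x hx
    rw [abs_mul, abs_of_pos hC0] at hx
    rw [lt_div_iff₀ hC0]
    nlinarith
  have hinj : Set.InjOn Φ G := by
    intro g hg g' hg' heq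
    by_contra hne
    obtain ⟨hgI, -, -, -⟩ := (hg : inG F σ₁ σ₂ C I g)
    obtain ⟨hgI', -, -, -⟩ := (hg' : inG F σ₁ σ₂ C I g')
    have hmem : g - g' ∈ I := by
      have h1 : g ∈ (I : Submodule (𝓞 F) F) := FractionalIdeal.mem_coe.2 hgI
      have h2 : g' ∈ (I : Submodule (𝓞 F) F) := FractionalIdeal.mem_coe.2 hgI'
      exact FractionalIdeal.mem_coe.1 (Submodule.sub_mem _ h1 h2)
    have hd1 : |C * σ₁ g - C * σ₁ g'| < 1 := floor_eq_abs_sub_lt _ _ (congrArg Prod.fst heq)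
    have hd2 : |C * σ₂ g - C * σ₂ g'| < 1 := floor_eq_abs_sub_lt _ _ (congrArg Prod.snd heq)
    have he1 : |σ₁ (g - g')| < 1 / C := by
      apply key
      rw [map_sub]
      calc |C * (σ₁ g - σ₁ g')| = |C * σ₁ g - C * σ₁ g'| := by ring_nf
        _ < 1 := hd1
    have he2 : |σ₂ (g - g')| < 1 / C := by
      apply key
      rw [map_sub]
      calc |C * (σ₂ g - σ₂ g')| = |C * σ₂ g - C * σ₂ g'| := by ring_nf
        _ < 1 := hd2
    have hx2 : (σ₁ (g - g'))^2 < (1/C)^2 := by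
      rw [← sq_abs]
      exact pow_lt_pow_left₀ he1 (abs_nonneg _) (by norm_num)
    have hy2 : (σ₂ (g - g'))^2 < (1/C)^2 := by
      rw [← sq_abs]
      exact pow_lt_pow_left₀ he2 (abs_nonneg _) (by norm_num)
    have hsum : (σ₁ (g - g'))^2 + (σ₂ (g - g'))^2 < 2 / C^2 := by
      have e : (2:ℝ)/C^2 = (1/C)^2 + (1/C)^2 := by ring
      linarith
    exact hS1 (g - g') hmem (sub_ne_zero.2 hne) ⟨he1.le, he2.le, hsum⟩
  set T : Finset (ℤ × ℤ) :=
    (Finset.Icc (-(M:ℤ)) (M:ℤ) ×ˢ Finset.Icc (-1:ℤ) 0) ∪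
      (Finset.Icc (-1:ℤ) 0 ×ˢ Finset.Icc (-(M:ℤ)) (M:ℤ)) with hT
  have himg : ∀ g ∈ G, Φ g ∈ T := by
    intro g hg
    obtain ⟨hgI, hg0, hgprod, hgnorm⟩ := (hg : inG F σ₁ σ₂ C I g)
    have hb1 : |σ₁ g| ≤ qnorm σ₁ σ₂ g := by
      rw [← Real.sqrt_sq_eq_abs]
      exact Real.sqrt_le_sqrt (by nlinarith [sq_nonneg (σ₂ g)])
    have hb2 : |σ₂ g| ≤ qnorm σ₁ σ₂ g := by
      rw [← Real.sqrt_sq_eq_abs]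
      exact Real.sqrt_le_sqrt (by nlinarith [sq_nonneg (σ₁ g)])
    have hbig : ∀ x : ℝ, |x| ≤ qnorm σ₁ σ₂ g → ⌊C * x⌋ ∈ Finset.Icc (-(M:ℤ)) (M:ℤ) := by
      intro x hx
      have hZ : |C * x| < C * R := by
        rw [abs_mul, abs_of_pos hC0]
        calc C * |x| ≤ C * qnorm σ₁ σ₂ g := by nlinarith
          _ < C * R := mul_lt_mul_of_pos_left hgnorm hC0
      rw [abs_lt] at hZ
      rw [Finset.mem_Icc]
      constructor
      · apply Int.le_floor.2
        push_cast
        linarith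
      · have h1 : (⌊C * x⌋ : ℝ) ≤ C * x := Int.floor_le _
        have h2 : ((⌊C * x⌋ : ℤ) : ℝ) ≤ ((M:ℤ) : ℝ) := by push_cast; linarith
        exact_mod_cast h2
    have hsmall : ∀ x : ℝ, x^2 < 1/C^2 → ⌊C * x⌋ ∈ Finset.Icc (-1:ℤ) 0 := by
      intro x hx
      have h1 : |x| < 1/C := by
        apply abs_lt_of_sq_lt _ _ (by positivity)
        rw [div_pow, one_pow]
        exact hx
      have habs : |C * x| < 1 := by
        rw [abs_mul, abs_of_pos hC0]
        calc C * |x| < C * (1/C) := mul_lt_mul_of_pos_left h1 hC0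
          _ = 1 := by field_simp
      rw [abs_lt] at habs
      rw [Finset.mem_Icc]
      constructor
      · apply Int.le_floor.2
        push_cast
        linarith
      · have h2 : ⌊C * x⌋ < (1:ℤ) := Int.floor_lt.2 (by push_cast; linarith)
        omega
    rcases mul_neg_iff.1 hgprod with ⟨hp, hq⟩ | ⟨hp, hq⟩
    · exact Finset.mem_union_left _ (Finset.mem_product.2 ⟨hbig _ hb1, hsmall _ (by linarith)⟩)
    · exact Finset.mem_union_right _ (Finset.mem_product.2 ⟨hsmall _ (by linarith), hbig _ hb2⟩)
  have himg' : Φ '' G ⊆ ↑T := by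
    rintro _ ⟨g, hg, rfl⟩
    exact_mod_cast himg g hg
  have hfin : G.Finite := Set.Finite.of_finite_image (T.finite_toSet.subset himg') hinj
  have hcount : (G.ncard : ℝ) ≤ (T.card : ℝ) := by
    have h1 : G.ncard = (Φ '' G).ncard := (Set.ncard_image_of_injOn hinj).symm
    have h2 : (Φ '' G).ncard ≤ T.card := by
      rw [← Set.ncard_coe_finset]
      exact Set.ncard_le_ncard himg' T.finite_toSet
    rw [h1]
    exact_mod_cast h2
  have hTcard : (T.card : ℝ) ≤ 8 * (M:ℝ) + 4 := by
    have hIcc : (Finset.Icc (-(M:ℤ)) (M:ℤ)).card = 2*M+1 := by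
      rw [Int.card_Icc]
      omega
    have hIcc2 : (Finset.Icc (-1:ℤ) 0).card = 2 := by rw [Int.card_Icc]; rfl
    have h1 : T.card ≤ (2*M+1)*2 + 2*(2*M+1) := by
      refine le_trans (Finset.card_union_le _ _) ?_
      rw [Finset.card_product, Finset.card_product, hIcc, hIcc2]
    calc (T.card : ℝ) ≤ (((2*M+1)*2 + 2*(2*M+1) : ℕ) : ℝ) := by exact_mod_cast h1
      _ = 8*(M:ℝ) + 4 := by push_cast; ring
  exact ⟨hfin, by linarith⟩
end
end

section
/- Let F be a real quadratic field, C ≥ 1, let I be a fractional ideal of F regarded as a lattice in ℝ², and let {b₁, b₂} be an LLL-reduced basis of I with ‖b₁‖ > 1/C. If g = s₁·b₁ + s₂·b₂ (s₁, s₂ ∈ ℤ) is an element of I lying in the square S₁ (in particular ‖g‖ < √2/C), then |s₁| ≤ 2 and |s₂| ≤ 1. Hence, up to sign, at most six elements of I need to be checked to decide whether I has a nonzero element in S₁. -/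
open NumberField
open scoped nonZeroDivisors

noncomputable section

set_option maxHeartbeats 1000000 in
/-- Let `F` be a real quadratic field, `C ≥ 1`, `I` a fractional ideal regarded as a lattice
in `ℝ²`, and `{b₁, b₂}` an LLL-reduced basis of `I` with `‖b₁‖ > 1/C`. If
`g = s₁·b₁ + s₂·b₂` (`s₁, s₂ ∈ ℤ`) lies in the square `S₁`, then `|s₁| ≤ 2` and `|s₂| ≤ 1`.
Hence, up to sign, at most six elements of `I` need to be checked to decide whether `I` has
a nonzero element in `S₁`. -/
theorem stmt_14 (F : Type*) [Field F] [NumberField F]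
    (hdeg : Module.finrank ℚ F = 2)
    (σ₁ σ₂ : F →+* ℝ) (hσ : σ₁ ≠ σ₂)
    (C : ℝ) (hC : 1 ≤ C) (I : FractionalIdeal (𝓞 F)⁰ F)
    (b₁ b₂ : F) (hLLL : isLLLBasis F σ₁ σ₂ I b₁ b₂)
    (hb₁ : 1 / C < qnorm σ₁ σ₂ b₁) :
    (∀ s₁ s₂ : ℤ, inS1 σ₁ σ₂ C (s₁ • b₁ + s₂ • b₂) → |s₁| ≤ 2 ∧ |s₂| ≤ 1) ∧
    ((∃ g : F, g ∈ I ∧ g ≠ 0 ∧ inS1 σ₁ σ₂ C g) ↔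
      (∃ s₁ s₂ : ℤ, |s₁| ≤ 2 ∧ |s₂| ≤ 1 ∧ (s₁ • b₁ + s₂ • b₂ : F) ≠ 0 ∧
        inS1 σ₁ σ₂ C (s₁ • b₁ + s₂ • b₂))) := by
  obtain ⟨hb1I, hb2I, hspan, hindep, hmu_le, hlllcond⟩ := hLLL
  have hCpos : (0:ℝ) < C := lt_of_lt_of_le one_pos hC
  have hCinv : (0:ℝ) < 1 / C := by positivity
  set A := σ₁ b₁ with hA
  set B := σ₂ b₁ with hB
  set X := σ₁ b₂ with hX
  set Y := σ₂ b₂ with hY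
  clear_value A B X Y
  have hb₁' : 1 / C < Real.sqrt (A ^ 2 + B ^ 2) := by rw [hA, hB]; exact hb₁
  have hn1pos : 0 < A ^ 2 + B ^ 2 := Real.sqrt_pos.mp (lt_trans hCinv hb₁')
  have hn1C : 1 / C ^ 2 < A ^ 2 + B ^ 2 := by
    have := (Real.lt_sqrt (by positivity)).mp hb₁'
    calc 1 / C ^ 2 = (1 / C) ^ 2 := by ring
    _ < A ^ 2 + B ^ 2 := this
  set μ := (X * A + Y * B) / (A ^ 2 + B ^ 2) with hμ
  have hmu_def : μ * (A ^ 2 + B ^ 2) = X * A + Y * B :=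
    div_mul_cancel₀ _ (ne_of_gt hn1pos)
  clear_value μ
  have hμsq : μ ^ 2 ≤ 1 / 4 := by
    have h := abs_le.mp hmu_le
    nlinarith [h.1, h.2]
  have hbst : (X - μ * A) ^ 2 + (Y - μ * B) ^ 2 ≥
      (A ^ 2 + B ^ 2) / 2 := by
    nlinarith [hlllcond, hμsq, hn1pos]
  have key : ∀ s₁ s₂ : ℤ, inS1 σ₁ σ₂ C (s₁ • b₁ + s₂ • b₂) → |s₁| ≤ 2 ∧ |s₂| ≤ 1 := by
    intro s₁ s₂ hS
    obtain ⟨-, -, hlt⟩ := hS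
    have hg1 : σ₁ ((s₁ • b₁ + s₂ • b₂ : F)) = (s₁ : ℝ) * A + (s₂ : ℝ) * X := by
      simp [map_add, map_zsmul, zsmul_eq_mul, hA, hX]
    have hg2 : σ₂ ((s₁ • b₁ + s₂ • b₂ : F)) = (s₁ : ℝ) * B + (s₂ : ℝ) * Y := by
      simp [map_add, map_zsmul, zsmul_eq_mul, hB, hY]
    rw [hg1, hg2] at hlt
    have hid : ((s₁:ℝ) * A + (s₂:ℝ) * X) ^ 2 + ((s₁:ℝ) * B + (s₂:ℝ) * Y) ^ 2 =
        ((s₁:ℝ) + (s₂:ℝ) * μ) ^ 2 * (A ^ 2 + B ^ 2) +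
        (s₂:ℝ) ^ 2 * ((X - μ * A) ^ 2 + (Y - μ * B) ^ 2) := by
      linear_combination ((-2 : ℝ) * (s₂:ℝ) * ((s₁:ℝ) + (s₂:ℝ) * μ)) * hmu_def
    rw [hid] at hlt
    have htwo : 2 / C ^ 2 < 2 * (A ^ 2 + B ^ 2) := by
      have h2 : 2 / C ^ 2 = 2 * (1 / C ^ 2) := by ring
      rw [h2]; linarith
    have hTpos : (0:ℝ) < (X - μ * A) ^ 2 + (Y - μ * B) ^ 2 :=
      lt_of_lt_of_le (by linarith) hbst
    have hs2r : (s₂:ℝ) ^ 2 < 4 := by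
      have h4 : (s₂:ℝ) ^ 2 * ((X - μ * A) ^ 2 + (Y - μ * B) ^ 2) <
          4 * ((X - μ * A) ^ 2 + (Y - μ * B) ^ 2) := by
        linarith [mul_nonneg (sq_nonneg ((s₁:ℝ) + (s₂:ℝ) * μ)) hn1pos.le]
      exact (mul_lt_mul_iff_of_pos_right hTpos).mp h4
    have hs1r : ((s₁:ℝ) + (s₂:ℝ) * μ) ^ 2 < 2 := by
      have h4 : ((s₁:ℝ) + (s₂:ℝ) * μ) ^ 2 * (A ^ 2 + B ^ 2) <
          2 * (A ^ 2 + B ^ 2) := by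
        linarith [mul_nonneg (sq_nonneg (s₂:ℝ)) hTpos.le]
      exact (mul_lt_mul_iff_of_pos_right hn1pos).mp h4
    have h14 : (0:ℝ) ≤ 1 / 4 - μ ^ 2 := by linarith
    have e1 : (s₂:ℝ) ^ 2 * μ ^ 2 ≤ 1 := by
      have h0 := mul_nonneg (sq_nonneg (s₂:ℝ)) h14
      linarith [h0]
    have e2 : (s₁:ℝ) ^ 2 ≤ 2 * ((s₁:ℝ) + (s₂:ℝ) * μ) ^ 2 +
        2 * ((s₂:ℝ) ^ 2 * μ ^ 2) := by
      linarith [sq_nonneg ((s₁:ℝ) + 2 * (s₂:ℝ) * μ)]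
    have hs1r' : (s₁:ℝ) ^ 2 < 9 := by linarith
    have h9 : (s₁:ℝ) ^ 2 < 3 ^ 2 := by norm_num; exact hs1r'
    have h4' : (s₂:ℝ) ^ 2 < 2 ^ 2 := by norm_num; exact hs2r
    have ha1 : |(s₁:ℝ)| < 3 := abs_lt_of_sq_lt_sq h9 (by norm_num)
    have ha2 : |(s₂:ℝ)| < 2 := abs_lt_of_sq_lt_sq h4' (by norm_num)
    rw [← Int.cast_abs] at ha1 ha2
    have hz1 : |s₁| < 3 := by exact_mod_cast ha1
    have hz2 : |s₂| < 2 := by exact_mod_cast ha2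
    exact ⟨by omega, by omega⟩
  refine ⟨key, ?_, ?_⟩
  · rintro ⟨g, hgI, hg0, hgS⟩
    obtain ⟨s₁, s₂, rfl⟩ := hspan g hgI
    obtain ⟨h1, h2⟩ := key s₁ s₂ hgS
    exact ⟨s₁, s₂, h1, h2, hg0, hgS⟩
  · rintro ⟨s₁, s₂, -, -, hg0, hgS⟩
    refine ⟨s₁ • b₁ + s₂ • b₂, ?_, hg0, hgS⟩
    rw [← FractionalIdeal.mem_coe] at hb1I hb2I ⊢
    exact Submodule.add_mem _ (zsmul_mem hb1I s₁) (zsmul_mem hb2I s₂)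
end
end
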